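/- arXiv:2005.06354 — 3 statements merged into one kernel-verified Lean document; each statement's English description precedes it below -/
import Mathlib

section
/- Let n,k ≥ 1, let m = (m_1,…,m_k) be an array of nonnegative integers, and let τ be a permutation of {1,…,k}. Set m' = (m_{τ(1)},…,m_{τ(k)}). Then there exists a bijection from A_n^k(m) to A_n^k(m'), a ↦ b, such that DEZ(a) = DEZ(b) and Der(a) = Der(b). -/
/-!
The colour permutations `τ` for which such a bijection exists form a submonoid of the symmetric
group (compose the bijections), so it is enough to treat the adjacent transpositions `(c c+1)`.
For these we keep the permutation and only recolour fixed points, by a Bender–Knuth involution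
on the word obtained from the one-line notation by writing `¬(d+1)` at a fixed point of colour `d`.
The letters `lo = ¬(c+2)` and `hi = ¬(c+1)` are consecutive integers. In every maximal run of
letters from `{lo, hi}`, padded by `lo` in front and `hi` at the back, the maximal weakly increasing
blocks are `lo^(p+1) hi^(q+1)`; replacing each by `lo^(q+1) hi^(p+1)` keeps the block lengths, hence
the descents inside the run, and exchanges the numbers of `lo` and `hi`. No letter lies strictly
between `lo` and `hi`, so comparisons with the neighbours of a run do not change either, and the
positive letters stay in place: `DEZ`, `Der` and all other colour counts are preserved.
-/

open scoped Classical

namespace KArr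

/-- Positive reduction of a word over ℤ: each positive letter is replaced by its
rank among the distinct positive letters of the word; negative letters unchanged. -/
def posReduce (w : List ℤ) : List ℤ :=
  w.map fun x => if 0 < x then ((w.toFinset.filter fun y => 0 < y ∧ y ≤ x).card : ℤ) else x

/-- The set of descents of a word (1-indexed: `i` is a descent iff `w_i > w_{i+1}`). -/
def desSet (w : List ℤ) : Finset ℕ :=
  (Finset.range w.length).filter fun i => 1 ≤ i ∧ w.getD i 0 < w.getD (i - 1) 0

/-- The number of descents of a word. -/
def desNum (w : List ℤ) : ℕ := (desSet w).card

/-- The subword of positive letters. -/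
def posPart (w : List ℤ) : List ℤ := w.filter fun x => decide (0 < x)

/-- A `k`-arrangement of `[n]`: a permutation together with a color in `Fin k`
attached to each fixed point (encoded as a total coloring that is `0` off the
fixed points). -/
abbrev Arrangement (n k : ℕ) :=
  {x : Equiv.Perm (Fin n) × (Fin n → Fin k) // ∀ j, x.1 j ≠ j → (x.2 j : ℕ) = 0}

/-- The derangement form of a `k`-arrangement: replace each fixed point by the
negative letter recording its color, then positively reduce.  (Color `c : Fin k`
encodes the letter `¬(c+1) = -(c+1)`.) -/
def dfWord {n k : ℕ} (a : Arrangement n k) : List ℤ :=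
  posReduce <| (List.finRange n).map fun i =>
    if a.1.1 i = i then -(((a.1.2 i : ℕ) : ℤ) + 1) else ((a.1.1 i : ℕ) : ℤ) + 1

/-- The permutation form of a `k`-arrangement: replace each fixed point whose
color is not `¬k` by the corresponding negative letter, then positively reduce. -/
def pfWord {n k : ℕ} (a : Arrangement n k) : List ℤ :=
  posReduce <| (List.finRange n).map fun i =>
    if a.1.1 i = i ∧ (a.1.2 i : ℕ) + 1 ≠ k then -(((a.1.2 i : ℕ) : ℤ) + 1)
    else ((a.1.1 i : ℕ) : ℤ) + 1

/-- `fix_i(a)`: the number of fixed points of the base permutation with color `c`. -/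
noncomputable def fixCount {n k : ℕ} (a : Arrangement n k) (c : Fin k) : ℕ :=
  Nat.card {i : Fin n // a.1.1 i = i ∧ a.1.2 i = c}

/-- `DEZ(a)`, the descent set of the derangement form. -/
def DEZset {n k : ℕ} (a : Arrangement n k) : Finset ℕ := desSet (dfWord a)

/-- `DES(a)`, the descent set of the permutation form. -/
def DESset {n k : ℕ} (a : Arrangement n k) : Finset ℕ := desSet (pfWord a)

/-- `dez(a)`, the number of descents of the derangement form. -/
def dez {n k : ℕ} (a : Arrangement n k) : ℕ := desNum (dfWord a)

/-- `des(a)`, the number of descents of the permutation form. -/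
def des {n k : ℕ} (a : Arrangement n k) : ℕ := desNum (pfWord a)

/-- `Der(a)`, the derangement part: the positive subword of the derangement form. -/
def Der {n k : ℕ} (a : Arrangement n k) : List ℤ := posPart (dfWord a)

/-- One-line notation of a permutation of `[n]`, as a word over `ℤ` with letters `1,…,n`. -/
def oneLine {n : ℕ} (π : Equiv.Perm (Fin n)) : List ℤ :=
  (List.finRange n).map fun i => ((π i : ℕ) : ℤ) + 1

/-- A word `w` contains the pattern `p` if some subsequence of `w` of the same
length as `p` is order-isomorphic to `p` (entrywise strict inequalities match). -/
def Contains (w p : List ℤ) : Prop :=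
  ∃ s : List ℤ, s.Sublist w ∧ s.length = p.length ∧
    ∀ i j, i < p.length → j < p.length →
      (s.getD i 0 < s.getD j 0 ↔ p.getD i 0 < p.getD j 0)

/-- A word avoids a pattern if it does not contain it. -/
def Avoids (w p : List ℤ) : Prop := ¬ Contains w p


/-- `dez`-word of a permutation: replace each fixed point by `¬1 = -1`,
then positively reduce (the `1`-arrangement derangement form). -/
def dzWordPerm {n : ℕ} (π : Equiv.Perm (Fin n)) : List ℤ :=
  posReduce <| (List.finRange n).map fun i =>
    if π i = i then (-1 : ℤ) else ((π i : ℕ) : ℤ) + 1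

/-- The weak derangement part `Der_k(a)`: the derangement form with all letters `¬k` removed. -/
def wDer {n k : ℕ} (a : Arrangement n k) : List ℤ :=
  (dfWord a).filter fun x => decide (x ≠ -(k : ℤ))

/-- For a word `w` which is a derangement form, position `j` (0-indexed) of `w` is an
excedance of the base permutation iff the letter is positive and exceeds the number
of positive letters among the first `j+1` letters. -/
def isExcAt (w : List ℤ) (j : ℕ) : Prop :=
  ((((w.take (j + 1)).filter fun x => decide (0 < x)).length : ℤ)) < w.getD j 0

/-- `e_i = E` for the (1-indexed) letter positions `0 ≤ i ≤ m+1` of `w`, with the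
boundary conventions `e_0 = e_{m+1} = E`. -/
def slotE (w : List ℤ) (i : ℕ) : Prop :=
  i = 0 ∨ i = w.length + 1 ∨ isExcAt w (i - 1)

/-- `w_i > w_{i+1}` (1-indexed letters) with the conventions `w_0 = w_{m+1} = +∞`;
this is the descent condition attached to slot `i`, `0 ≤ i ≤ m`. -/
def slotGt (w : List ℤ) (i : ℕ) : Prop :=
  i = 0 ∨ (i < w.length ∧ w.getD i 0 < w.getD (i - 1) 0)

/-- Slot `i` is of type I: `w_i > w_{i+1}` and `(e_i, e_{i+1}) = (E, N)`. -/
def typeI (w : List ℤ) (i : ℕ) : Prop := slotGt w i ∧ slotE w i ∧ ¬ slotE w (i + 1)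

/-- Slot `i` is of type II: `w_i ≤ w_{i+1}` and `(e_i, e_{i+1}) = (N, E)`. -/
def typeII (w : List ℤ) (i : ℕ) : Prop := ¬ slotGt w i ∧ ¬ slotE w i ∧ slotE w (i + 1)

/-- Slot `i` is of type III: `w_i ≤ w_{i+1}` and `(e_i, e_{i+1}) ≠ (N, E)`. -/
def typeIII (w : List ℤ) (i : ℕ) : Prop := ¬ slotGt w i ∧ ¬ (¬ slotE w i ∧ slotE w (i + 1))

/-- Slot `i` is of type IV: `w_i > w_{i+1}` and `(e_i, e_{i+1}) ≠ (E, N)`. -/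
def typeIV (w : List ℤ) (i : ℕ) : Prop := slotGt w i ∧ ¬ (slotE w i ∧ ¬ slotE w (i + 1))

/-- The length `s_i` of the `i`-th slot of the word `u` (a derangement form),
where the slot letters are the letters equal to `c` (`= ¬k`). -/
def slotLen (u : List ℤ) (c : ℤ) (i : ℕ) : ℕ :=
  let L := (List.range u.length).filter fun j => decide (u.getD j 0 ≠ c)
  (if i < L.length then L.getD i 0 else u.length) - (if i = 0 then 0 else L.getD (i - 1) 0 + 1)

/-- The number of peaks of a word: indices `i` (1-indexed, `2 ≤ i ≤ n-1`)
with `w_{i-1} < w_i > w_{i+1}`. -/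
def peakNum (w : List ℤ) : ℕ :=
  ((List.range w.length).filter fun i => decide (0 < i ∧ i + 1 < w.length ∧
    w.getD (i - 1) 0 < w.getD i 0 ∧ w.getD (i + 1) 0 < w.getD i 0)).length

/-- Number of fixed points of a permutation. -/
noncomputable def fixNum {n : ℕ} (π : Equiv.Perm (Fin n)) : ℕ :=
  Nat.card {i : Fin n // π i = i}

/-- Number of excedances of a permutation. -/
noncomputable def excNum {n : ℕ} (π : Equiv.Perm (Fin n)) : ℕ :=
  Nat.card {i : Fin n // i < π i}

/-- Number of anti-excedances of a permutation. -/
noncomputable def aexcNum {n : ℕ} (π : Equiv.Perm (Fin n)) : ℕ :=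
  Nat.card {i : Fin n // π i < i}

/-- `ldes` of a word: the smallest `i` which is a descent or equals the length
(0 for the empty word). -/
def ldesW (w : List ℤ) : ℕ :=
  (((List.range (w.length + 1)).filter fun i =>
    decide ((1 ≤ i ∧ i < w.length ∧ w.getD i 0 < w.getD (i - 1) 0) ∨ i = w.length))).headD 0

/-- `rdes` of a word: the length minus the position of the rightmost descent
(`sSup ∅ = 0` when there is no descent). -/
def rdesW (w : List ℤ) : ℕ :=
  w.length - ((List.range w.length).filter fun i =>
    decide (1 ≤ i ∧ w.getD i 0 < w.getD (i - 1) 0)).foldr max 0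

/-- Number of crossing descents of a permutation: (1-indexed) descents `i` with
`σ(i) ≥ i+1 ≥ σ(i+1)`. -/
def xdesW (w : List ℤ) : ℕ :=
  ((List.range w.length).filter fun i : ℕ =>
    decide (1 ≤ i ∧ (i : ℤ) + 1 ≤ w.getD (i - 1) 0 ∧ w.getD i 0 ≤ (i : ℤ) + 1)).length

/-- Number of crossing descents of a permutation. -/
def xdesNum {n : ℕ} (σ : Equiv.Perm (Fin n)) : ℕ := xdesW (oneLine σ)

/-- A height sequence `d` encodes a Dyck path: it is weakly increasing and `d_i ≤ i - 1`
(1-indexed), i.e. `d.getD i 0 ≤ i` (0-indexed). -/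
def IsDyck (d : List ℕ) : Prop :=
  List.Pairwise (· ≤ ·) d ∧ ∀ i < d.length, d.getD i 0 ≤ i

/-- Number of hills of a Dyck path: east steps of height equal to their index that
touch the diagonal and are immediately followed by a north step. -/
def hillNum (d : List ℕ) : ℕ :=
  ((List.range d.length).filter fun i => decide (d.getD i 0 = i ∧
    (i + 1 = d.length ∨ d.getD i 0 < d.getD (i + 1) 0))).length

/-- Number of segments of a Dyck path: maximal runs of at least two consecutive
equal heights (counted by their starting index). -/
def segNum (d : List ℕ) : ℕ :=
  ((List.range d.length).filter fun i => decide (i + 1 < d.length ∧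
    d.getD i 0 = d.getD (i + 1) 0 ∧ (i = 0 ∨ d.getD (i - 1) 0 ≠ d.getD i 0))).length

/-- `lseg`: the (1-indexed) position of the last step of the leftmost segment,
or `n+1` if there is no segment. -/
def lsegNum (d : List ℕ) : ℕ :=
  (((List.range (d.length + 2)).filter fun i =>
    decide ((2 ≤ i ∧ i ≤ d.length ∧ d.getD (i - 2) 0 = d.getD (i - 1) 0 ∧
      (i = d.length ∨ d.getD (i - 1) 0 ≠ d.getD i 0)) ∨ i = d.length + 1))).headD 0

/-- Dyck paths of semilength `n`, encoded as monotone functions `Fin n → Fin (n+1)`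
bounded by the diagonal (their height sequences). -/
def DyckFinset (n : ℕ) : Finset (Fin n → Fin (n + 1)) :=
  Finset.univ.filter fun f =>
    (∀ i j : Fin n, i ≤ j → f i ≤ f j) ∧ ∀ i : Fin n, (f i : ℕ) ≤ (i : ℕ)

/-- The height sequence of a function `Fin n → Fin (n+1)` as a list. -/
def hList {n : ℕ} (f : Fin n → Fin (n + 1)) : List ℕ :=
  (List.finRange n).map fun i => (f i : ℕ)

theorem _root_.List.Forall₂.getLastD {α β : Type*} {R : α → β → Prop} {l : List α}
    {l' : List β} (h : List.Forall₂ R l l') {x : α} {x' : β} (hx : R x x') :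
    R (l.getLastD x) (l'.getLastD x') := by
  induction h generalizing x x' with
  | nil => exact hx
  | cons hab _ ih => rw [List.getLastD_cons, List.getLastD_cons]; exact ih hab

theorem _root_.List.Forall₂.getD {α β : Type*} {R : α → β → Prop} {l : List α}
    {l' : List β} (h : List.Forall₂ R l l') {d : α} {d' : β} (hd : R d d') (j : ℕ) :
    R (l.getD j d) (l'.getD j d') := by
  induction h generalizing j with
  | nil => exact hd
  | cons hab _ ih => cases j <;> simp only [List.getD_cons_zero, List.getD_cons_succ, hab, ih]

section Descents

variable {α : Type*} [LinearOrder α]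

def descentsFrom (x : α) : List α → List Bool
  | [] => []
  | y :: l => decide (y < x) :: descentsFrom y l

@[simp] theorem length_descentsFrom (x : α) (l : List α) :
    (descentsFrom x l).length = l.length := by
  induction l generalizing x <;> simp [descentsFrom, *]

theorem getElem_descentsFrom (x : α) (l : List α) (i : ℕ) (h : i < (descentsFrom x l).length) :
    (descentsFrom x l)[i] =
      decide (l[i]'(by simpa using h) < (x :: l)[i]'(by simp at h ⊢; omega)) := by
  induction l generalizing x i with
  | nil => simp at h
  | cons y l ih => cases i <;> simp [descentsFrom, ih]

theorem descentsFrom_append (x : α) (l m : List α) :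
    descentsFrom x (l ++ m) = descentsFrom x l ++ descentsFrom (l.getLastD x) m := by
  induction l generalizing x with
  | nil => rfl
  | cons y l ih => simp only [List.cons_append, descentsFrom, ih, List.getLastD_cons]

theorem descentsFrom_map {β : Type*} [LinearOrder β] {f : α → β} {s : Set α}
    (hf : StrictMonoOn f s) {x : α} {l : List α} (hx : x ∈ s) (hl : ∀ y ∈ l, y ∈ s) :
    descentsFrom (f x) (l.map f) = descentsFrom x l := by
  induction l generalizing x with
  | nil => rfl
  | cons y l ih =>
    simp only [List.map_cons, descentsFrom, List.cons.injEq, decide_eq_decide]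
    have hy := hl y List.mem_cons_self
    exact ⟨hf.lt_iff_lt hy hx, ih hy fun z hz => hl z (List.mem_cons_of_mem y hz)⟩

theorem descentsFrom_of_isChain (x y : α) (l : List α) (h : (y :: l).IsChain (· ≤ ·)) :
    descentsFrom x (y :: l) = decide (y < x) :: List.replicate l.length false := by
  induction l generalizing x y with
  | nil => rfl
  | cons z l ih =>
    rw [List.isChain_cons_cons] at h
    rw [descentsFrom, ih y z h.2]
    simp [List.replicate_succ, not_lt.mpr h.1]

end Descents

theorem desSet_eq_of_descentsFrom_eq {w w' : List ℤ} {y y' : ℤ}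
    (h : descentsFrom y w = descentsFrom y' w') : desSet w = desSet w' := by
  have hlen : w.length = w'.length := by simpa using congrArg List.length h
  ext i
  simp only [desSet, Finset.mem_filter, Finset.mem_range]
  rcases i with _ | j
  · simp
  by_cases hj : j + 1 < w.length
  · have key := congrArg (·[j + 1]?) h
    rw [List.getElem?_eq_getElem (by simpa using hj),
      List.getElem?_eq_getElem (by simpa [← hlen] using hj),
      getElem_descentsFrom, getElem_descentsFrom] at key
    simp only [List.getElem_cons_succ, Option.some.injEq, decide_eq_decide] at key
    rw [List.getD_eq_getElem _ _ hj, List.getD_eq_getElem _ _ (by omega),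
      List.getD_eq_getElem _ _ (by omega), List.getD_eq_getElem _ _ (by omega)]
    simp [hj, ← hlen, key]
  · simp [hj, ← hlen]

def posRank (w : List ℤ) (x : ℤ) : ℤ :=
  if 0 < x then ((w.toFinset.filter fun y => 0 < y ∧ y ≤ x).card : ℤ) else x

theorem posReduce_eq_map (w : List ℤ) : posReduce w = w.map (posRank w) := rfl

theorem posRank_pos {w : List ℤ} {x : ℤ} (hx : x ∈ w) (h : 0 < x) : 0 < posRank w x := by
  rw [posRank, if_pos h, Nat.cast_pos, Finset.card_pos]
  exact ⟨x, by simp [hx, h]⟩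

theorem strictMonoOn_posRank (w : List ℤ) : StrictMonoOn (posRank w) {x | x ∈ w} := by
  intro x hx y hy hxy
  by_cases hx0 : 0 < x
  · rw [posRank, if_pos hx0, posRank, if_pos (hx0.trans hxy), Nat.cast_lt]
    refine Finset.card_lt_card ⟨fun z hz => ?_, fun hsub => ?_⟩
    · simp only [Finset.mem_filter] at hz ⊢
      exact ⟨hz.1, hz.2.1, hz.2.2.trans hxy.le⟩
    · have := hsub (show y ∈ _ by simp [show y ∈ w from hy, (hx0.trans hxy)])
      simp only [Finset.mem_filter] at this
      exact absurd this.2.2 (not_le.mpr hxy)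
  · rw [posRank, if_neg hx0]
    by_cases hy0 : 0 < y
    · exact (not_lt.mp hx0).trans_lt (posRank_pos hy hy0)
    · rwa [posRank, if_neg hy0]

theorem desSet_posReduce (w : List ℤ) : desSet (posReduce w) = desSet w := by
  cases w with
  | nil => rfl
  | cons x l =>
    exact desSet_eq_of_descentsFrom_eq
      (descentsFrom_map (x := x) (strictMonoOn_posRank (x :: l)) (by simp) fun z hz => hz)

theorem posPart_posReduce (w : List ℤ) : posPart (posReduce w) = posReduce (posPart w) := by
  rw [posReduce_eq_map, posReduce_eq_map, posPart, posPart, List.filter_map]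
  have hfilter : w.filter ((fun x => decide (0 < x)) ∘ posRank w) =
      w.filter fun x => decide (0 < x) := by
    refine List.filter_congr fun x hx => ?_
    by_cases h : 0 < x
    · simp [h, posRank_pos hx h]
    · simp [posRank, h]
  rw [hfilter]
  refine List.map_congr_left fun x hx => ?_
  have hx0 : 0 < x := by simpa using (List.mem_filter.mp hx).2
  rw [posRank, posRank, if_pos hx0, if_pos hx0, List.toFinset_filter, Finset.filter_filter]
  congr 3
  ext y
  simp only [decide_eq_true_eq]
  tauto

section BenderKnuth

variable {α : Type*} {lo hi : α}

def IsActive (lo hi x : α) : Prop := x = lo ∨ x = hi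

def SameUpToActive (lo hi x y : α) : Prop := x = y ∨ IsActive lo hi x ∧ IsActive lo hi y

def bkBlock (lo hi : α) (p q : ℕ) : List α :=
  List.replicate (p + 1) lo ++ List.replicate (q + 1) hi

theorem bkBlock_eq_cons_append (lo hi : α) (p q : ℕ) :
    bkBlock lo hi p q = lo :: (List.replicate p lo ++ List.replicate q hi ++ [hi]) := by
  rw [bkBlock, List.replicate_succ, List.replicate_succ']
  simp

theorem bkBlock_ne_nil (p q : ℕ) : bkBlock lo hi p q ≠ [] := by simp [bkBlock]

theorem head_bkBlock (p q : ℕ) (h : bkBlock lo hi p q ≠ []) :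
    (bkBlock lo hi p q).head h = lo := by
  simp [bkBlock_eq_cons_append]

theorem getLast_bkBlock (p q : ℕ) (h : bkBlock lo hi p q ≠ []) :
    (bkBlock lo hi p q).getLast h = hi := by
  simp [bkBlock_eq_cons_append]

theorem length_bkBlock (lo hi : α) (p q : ℕ) : (bkBlock lo hi p q).length = p + q + 2 := by
  simp only [bkBlock, List.length_append, List.length_replicate]
  omega

theorem getLastD_bkBlock (x : α) (p q : ℕ) : (bkBlock lo hi p q).getLastD x = hi := by
  rw [bkBlock_eq_cons_append, List.getLastD_cons, List.getLastD_concat]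

theorem exists_flatten_eq_cons_append {B : List (List α)} (hne : B ≠ [])
    (hB : ∀ b ∈ B, ∃ p q, b = bkBlock lo hi p q) : ∃ s, B.flatten = lo :: (s ++ [hi]) := by
  induction B with
  | nil => exact absurd rfl hne
  | cons b B ih =>
    obtain ⟨p, q, rfl⟩ := hB b (by simp)
    rcases eq_or_ne B [] with rfl | hB'
    · exact ⟨List.replicate p lo ++ List.replicate q hi, by simp [bkBlock_eq_cons_append]⟩
    · obtain ⟨s, hs⟩ := ih hB' fun c hc => hB c (by simp [hc])
      exact ⟨List.replicate p lo ++ List.replicate q hi ++ hi :: lo :: s,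
        by rw [List.flatten_cons, hs, bkBlock_eq_cons_append]; simp⟩

variable [LinearOrder α]

instance (lo hi x : α) : Decidable (IsActive lo hi x) :=
  inferInstanceAs (Decidable (x = lo ∨ x = hi))

def flipBlock (lo hi : α) (b : List α) : List α :=
  List.replicate (b.count hi) lo ++ List.replicate (b.count lo) hi

def bkBlocks (lo hi : α) (r : List α) : List (List α) :=
  (lo :: (r ++ [hi])).splitBy fun x y => decide (x ≤ y)

def benderKnuthRun (lo hi : α) (r : List α) : List α :=
  ((bkBlocks lo hi r).flatMap (flipBlock lo hi)).tail.dropLast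

def benderKnuthGroup (lo hi : α) (g : List α) : List α :=
  if ∀ x ∈ g, IsActive lo hi x then benderKnuthRun lo hi g else g

def activityRuns (lo hi : α) (w : List α) : List (List α) :=
  w.splitBy fun x y => decide (IsActive lo hi x ↔ IsActive lo hi y)

def benderKnuth (lo hi : α) (w : List α) : List α :=
  (activityRuns lo hi w).flatMap (benderKnuthGroup lo hi)

variable {r g : List α}

theorem flipBlock_bkBlock (hlh : lo ≠ hi) (p q : ℕ) :
    flipBlock lo hi (bkBlock lo hi p q) = bkBlock lo hi q p := by
  simp [flipBlock, bkBlock, List.count_replicate, hlh, hlh.symm]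

theorem sortedLE_bkBlock (hlh : lo ≤ hi) (p q : ℕ) : (bkBlock lo hi p q).SortedLE := by
  rw [List.sortedLE_iff_pairwise, bkBlock, List.pairwise_append]
  simp [List.pairwise_replicate, hlh]

theorem descentsFrom_bkBlock (hlh : lo < hi) (p q : ℕ) :
    descentsFrom hi (bkBlock lo hi p q) = true :: List.replicate (p + q + 1) false := by
  rw [bkBlock_eq_cons_append, descentsFrom_of_isChain]
  · simp only [decide_eq_true hlh, List.length_append, List.length_replicate,
      List.length_singleton]
  · rw [← bkBlock_eq_cons_append, ← List.sortedLE_iff_isChain]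
    exact sortedLE_bkBlock hlh.le p q

theorem exists_bkBlock_of_isChain (hlh : lo < hi) {b : List α} (hb : b.IsChain (· ≤ ·))
    (hact : ∀ x ∈ b, IsActive lo hi x) (hlo : lo ∈ b) (hhi : hi ∈ b) :
    ∃ p q, b = bkBlock lo hi p q := by
  obtain ⟨p, hp⟩ := Nat.exists_eq_add_one.mpr (List.count_pos_iff.mpr hlo)
  obtain ⟨q, hq⟩ := Nat.exists_eq_add_one.mpr (List.count_pos_iff.mpr hhi)
  refine ⟨p, q, List.Perm.eq_of_sortedLE (List.sortedLE_iff_isChain.mpr hb)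
    (sortedLE_bkBlock hlh.le _ _) (List.perm_iff_count.mpr fun a => ?_)⟩
  by_cases ha : IsActive lo hi a
  · rcases ha with rfl | rfl <;> simp [bkBlock, List.count_replicate, hlh.ne, hlh.ne', hp, hq]
  · rw [List.count_eq_zero.mpr fun h => ha (hact a h), bkBlock, List.count_append,
      List.count_replicate, List.count_replicate]
    simp only [IsActive, not_or] at ha
    simp [Ne.symm ha.1, Ne.symm ha.2]

theorem eq_lo_and_eq_hi_of_lt (hlh : lo < hi) {x y : α} (hx : IsActive lo hi x)
    (hy : IsActive lo hi y) (h : y < x) : y = lo ∧ x = hi := by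
  rcases hx with rfl | rfl <;> rcases hy with rfl | rfl
  exacts [absurd h (lt_irrefl _), absurd h hlh.asymm, ⟨rfl, rfl⟩, absurd h (lt_irrefl _)]

theorem isActive_of_mem_bkBlocks (hr : ∀ x ∈ r, IsActive lo hi x) {b : List α}
    (hb : b ∈ bkBlocks lo hi r) {x : α} (hx : x ∈ b) : IsActive lo hi x := by
  have : x ∈ lo :: (r ++ [hi]) := by
    rw [← List.flatten_splitBy (fun x y => decide (x ≤ y)) (lo :: (r ++ [hi]))]
    exact List.mem_flatten.mpr ⟨b, hb, hx⟩
  simp only [List.mem_cons, List.mem_append, List.not_mem_nil, or_false] at this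
  rcases this with h | h | h
  exacts [.inl h, hr x h, .inr h]

theorem isChain_bkBlocks (hlh : lo < hi) (hr : ∀ x ∈ r, IsActive lo hi x) :
    (bkBlocks lo hi r).IsChain fun g h => ∃ hg hh, g.getLast hg = hi ∧ h.head hh = lo := by
  refine (List.isChain_getLast_head_splitBy _ _).imp_of_mem_imp
    fun g h hg hh ⟨hg0, hh0, hlt⟩ => ⟨hg0, hh0, ?_⟩
  exact (eq_lo_and_eq_hi_of_lt hlh (isActive_of_mem_bkBlocks hr hg (List.getLast_mem hg0))
    (isActive_of_mem_bkBlocks hr hh (List.head_mem hh0)) (by simpa using hlt)).symm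

theorem lo_mem_of_mem_bkBlocks (hlh : lo < hi) (hr : ∀ x ∈ r, IsActive lo hi x) {b : List α}
    (hb : b ∈ bkBlocks lo hi r) : lo ∈ b := by
  refine List.IsChain.induction (fun b => lo ∈ b) _ (isChain_bkBlocks hlh hr) ?_
    (fun hne => ?_) b hb
  · rintro g h ⟨-, hh0, -, hh⟩ -
    exact hh ▸ List.head_mem hh0
  · have := List.head_mem (List.ne_nil_of_mem_splitBy (List.head_mem hne))
    unfold bkBlocks at this ⊢
    rwa [List.head_head_splitBy _ (List.cons_ne_nil _ _)] at this

theorem hi_mem_of_mem_bkBlocks (hlh : lo < hi) (hr : ∀ x ∈ r, IsActive lo hi x) {b : List α}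
    (hb : b ∈ bkBlocks lo hi r) : hi ∈ b := by
  refine List.IsChain.backwards_induction (fun b => hi ∈ b) _ (isChain_bkBlocks hlh hr) ?_
    (fun hne => ?_) b hb
  · rintro g h ⟨hg0, -, hg, -⟩ -
    exact hg ▸ List.getLast_mem hg0
  · have := List.getLast_mem (List.ne_nil_of_mem_splitBy (List.getLast_mem hne))
    unfold bkBlocks at this ⊢
    rw [List.getLast_getLast_splitBy _ (List.cons_ne_nil _ _)] at this
    simpa using this

theorem exists_bkBlock_of_mem_bkBlocks (hlh : lo < hi) (hr : ∀ x ∈ r, IsActive lo hi x)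
    {b : List α} (hb : b ∈ bkBlocks lo hi r) : ∃ p q, b = bkBlock lo hi p q :=
  exists_bkBlock_of_isChain hlh (by simpa using List.isChain_of_mem_splitBy hb)
    (fun _ => isActive_of_mem_bkBlocks hr hb) (lo_mem_of_mem_bkBlocks hlh hr hb)
    (hi_mem_of_mem_bkBlocks hlh hr hb)

theorem count_flipBlock_lo (hlh : lo ≠ hi) (b : List α) :
    (flipBlock lo hi b).count lo = b.count hi := by
  simp [flipBlock, List.count_replicate, hlh.symm]

theorem count_flipBlock_hi (hlh : lo ≠ hi) (b : List α) :
    (flipBlock lo hi b).count hi = b.count lo := by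
  simp [flipBlock, List.count_replicate, hlh]

theorem exists_bkBlock_of_mem_map_flipBlock (hlh : lo < hi) (hr : ∀ x ∈ r, IsActive lo hi x)
    {b : List α} (hb : b ∈ (bkBlocks lo hi r).map (flipBlock lo hi)) :
    ∃ p q, b = bkBlock lo hi p q := by
  obtain ⟨c, hc, rfl⟩ := List.mem_map.mp hb
  obtain ⟨p, q, rfl⟩ := exists_bkBlock_of_mem_bkBlocks hlh hr hc
  exact ⟨q, p, flipBlock_bkBlock hlh.ne p q⟩

theorem descentsFrom_flatten_of_bkBlocks (hlh : lo < hi) {B : List (List α)}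
    (hB : ∀ b ∈ B, ∃ p q, b = bkBlock lo hi p q) :
    descentsFrom hi B.flatten = B.flatMap fun b => true :: List.replicate (b.length - 1) false := by
  induction B with
  | nil => rfl
  | cons b B ih =>
    obtain ⟨p, q, rfl⟩ := hB b (by simp)
    rw [List.flatten_cons, descentsFrom_append, getLastD_bkBlock, descentsFrom_bkBlock hlh,
      ih fun c hc => hB c (by simp [hc]), List.flatMap_cons, length_bkBlock]
    rfl

theorem cons_benderKnuthRun_append (hlh : lo < hi) (hr : ∀ x ∈ r, IsActive lo hi x) :
    lo :: (benderKnuthRun lo hi r ++ [hi]) = (bkBlocks lo hi r).flatMap (flipBlock lo hi) := by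
  obtain ⟨s, hs⟩ := exists_flatten_eq_cons_append
    (by simp [bkBlocks])
    fun b hb => exists_bkBlock_of_mem_map_flipBlock hlh hr hb
  rw [benderKnuthRun, List.flatMap_def, hs]
  simp

theorem bkBlocks_benderKnuthRun (hlh : lo < hi) (hr : ∀ x ∈ r, IsActive lo hi x) :
    bkBlocks lo hi (benderKnuthRun lo hi r) = (bkBlocks lo hi r).map (flipBlock lo hi) := by
  have hB := fun b hb => exists_bkBlock_of_mem_map_flipBlock hlh hr (b := b) hb
  rw [bkBlocks, cons_benderKnuthRun_append hlh hr, List.splitBy_eq_iff]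
  refine ⟨rfl, fun h => ?_, fun b hb => ?_, List.Pairwise.isChain
    (List.pairwise_of_forall_mem_list fun g hg h hh => ?_)⟩
  · obtain ⟨p, q, hpq⟩ := hB [] h
    simp [bkBlock] at hpq
  · obtain ⟨p, q, rfl⟩ := hB b hb
    simpa [List.sortedLE_iff_isChain] using sortedLE_bkBlock hlh.le p q
  · obtain ⟨p, q, rfl⟩ := hB g hg
    obtain ⟨p', q', rfl⟩ := hB h hh
    refine ⟨bkBlock_ne_nil p q, bkBlock_ne_nil p' q', ?_⟩
    rw [getLast_bkBlock, head_bkBlock]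
    simpa using hlh

theorem isActive_of_mem_benderKnuthRun (hlh : lo < hi) (hr : ∀ x ∈ r, IsActive lo hi x)
    {x : α} (hx : x ∈ benderKnuthRun lo hi r) : IsActive lo hi x := by
  have : x ∈ lo :: (benderKnuthRun lo hi r ++ [hi]) := by simp [hx]
  rw [cons_benderKnuthRun_append hlh hr, List.flatMap_def, List.mem_flatten] at this
  obtain ⟨b, hb, hxb⟩ := this
  obtain ⟨p, q, rfl⟩ := exists_bkBlock_of_mem_map_flipBlock hlh hr hb
  simp only [bkBlock, List.mem_append, List.mem_replicate] at hxb
  rcases hxb with h | h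
  exacts [.inl h.2, .inr h.2]

theorem benderKnuthRun_benderKnuthRun (hlh : lo < hi) (hr : ∀ x ∈ r, IsActive lo hi x) :
    benderKnuthRun lo hi (benderKnuthRun lo hi r) = r := by
  rw [benderKnuthRun, bkBlocks_benderKnuthRun hlh hr, List.flatMap_map,
    List.flatMap_congr (g := id) fun b hb => ?_, List.flatMap_id, bkBlocks,
    List.flatten_splitBy]
  · simp
  · obtain ⟨p, q, rfl⟩ := exists_bkBlock_of_mem_bkBlocks hlh hr hb
    simp [flipBlock_bkBlock hlh.ne]

theorem count_cons_append_lo (hlh : lo ≠ hi) (s : List α) :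
    (lo :: (s ++ [hi])).count lo = s.count lo + 1 := by
  simp [hlh.symm]

theorem count_cons_append_hi (hlh : lo ≠ hi) (s : List α) :
    (lo :: (s ++ [hi])).count hi = s.count hi + 1 := by
  simp [hlh]

theorem count_benderKnuthRun (hlh : lo < hi) (hr : ∀ x ∈ r, IsActive lo hi x) :
    (benderKnuthRun lo hi r).count lo = r.count hi ∧
      (benderKnuthRun lo hi r).count hi = r.count lo := by
  have key := fun x => congrArg (List.count x) (cons_benderKnuthRun_append hlh hr)
  have hr' : lo :: (r ++ [hi]) = (bkBlocks lo hi r).flatten := (List.flatten_splitBy _ _).symm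
  have hlo := key lo
  have hhi := key hi
  rw [List.count_flatMap, Function.comp_def] at hlo hhi
  simp only [count_flipBlock_lo hlh.ne, count_flipBlock_hi hlh.ne, ← List.count_flatten,
    ← hr', count_cons_append_lo hlh.ne, count_cons_append_hi hlh.ne] at hlo hhi
  omega

theorem descentsFrom_cons_append_hi (hlh : lo < hi) {s : List α}
    (hs : ∀ x ∈ s, IsActive lo hi x) :
    descentsFrom hi (lo :: (s ++ [hi])) = true :: (descentsFrom lo s ++ [false]) := by
  have hlast : ¬ hi < s.getLastD lo := by
    rcases List.mem_cons.mp List.getLastD_mem_cons with h | h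
    · exact h ▸ hlh.asymm
    · rcases hs _ h with h' | h' <;> rw [h']
      exacts [hlh.asymm, lt_irrefl hi]
  simp only [descentsFrom, descentsFrom_append, hlh, hlast, decide_true, decide_false]

theorem descentsFrom_benderKnuthRun (hlh : lo < hi) (hr : ∀ x ∈ r, IsActive lo hi x) :
    descentsFrom lo (benderKnuthRun lo hi r) = descentsFrom lo r := by
  have key : descentsFrom hi (lo :: (benderKnuthRun lo hi r ++ [hi])) =
      descentsFrom hi (lo :: (r ++ [hi])) := by
    have hflat : lo :: (r ++ [hi]) = (bkBlocks lo hi r).flatten := (List.flatten_splitBy _ _).symm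
    rw [cons_benderKnuthRun_append hlh hr, List.flatMap_def,
      descentsFrom_flatten_of_bkBlocks hlh fun _ => exists_bkBlock_of_mem_map_flipBlock hlh hr,
      hflat, descentsFrom_flatten_of_bkBlocks hlh fun _ => exists_bkBlock_of_mem_bkBlocks hlh hr,
      List.flatMap_map]
    refine List.flatMap_congr fun b hb => ?_
    obtain ⟨p, q, rfl⟩ := exists_bkBlock_of_mem_bkBlocks hlh hr hb
    rw [flipBlock_bkBlock hlh.ne, length_bkBlock, length_bkBlock, add_comm q p]
  rw [descentsFrom_cons_append_hi hlh fun x => isActive_of_mem_benderKnuthRun hlh hr,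
    descentsFrom_cons_append_hi hlh hr] at key
  simpa using key

theorem lt_or_lt_of_not_isActive (hlh : lo ⋖ hi) {x : α} (hx : ¬IsActive lo hi x) :
    x < lo ∨ hi < x := by
  simp only [IsActive, not_or] at hx
  rcases lt_or_gt_of_ne hx.1 with h | h
  · exact .inl h
  · exact .inr (lt_of_le_of_ne (not_lt.mp (hlh.2 h)) (Ne.symm hx.2))

theorem lt_iff_lt_of_sameUpToActive (hlh : lo ⋖ hi) {x x' z z' : α}
    (hx : SameUpToActive lo hi x x') (hz : SameUpToActive lo hi z z')
    (h : ¬(IsActive lo hi x ∧ IsActive lo hi z)) : z < x ↔ z' < x' := by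
  have key : ∀ {a a' y : α}, IsActive lo hi a → IsActive lo hi a' → ¬IsActive lo hi y →
      (a < y ↔ a' < y) ∧ (y < a ↔ y < a') := by
    intro a a' y ha ha' hy
    have := hlh.lt
    rcases lt_or_lt_of_not_isActive hlh hy with h | h <;>
      rcases ha with rfl | rfl <;> rcases ha' with rfl | rfl <;>
      constructor <;> constructor <;> intro <;> order
  rcases hx with rfl | ⟨hx, hx'⟩ <;> rcases hz with rfl | ⟨hz, hz'⟩
  · rfl
  · exact (key hz hz' fun hx => h ⟨hx, hz⟩).1
  · exact (key hx hx' fun hz => h ⟨hx, hz⟩).2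
  · exact absurd ⟨hx, hz⟩ h

theorem length_benderKnuthRun (hlh : lo < hi) (hg : ∀ x ∈ g, IsActive lo hi x) :
    (benderKnuthRun lo hi g).length = g.length := by
  simpa using congrArg List.length (descentsFrom_benderKnuthRun hlh hg)

theorem forall₂_benderKnuthGroup (hlh : lo < hi) (g : List α) :
    List.Forall₂ (SameUpToActive lo hi) g (benderKnuthGroup lo hi g) := by
  unfold benderKnuthGroup
  split_ifs with hg
  · refine List.forall₂_iff_get.mpr ⟨(length_benderKnuthRun hlh hg).symm, fun i _ _ => ?_⟩
    exact .inr ⟨hg _ (List.get_mem _ _),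
      isActive_of_mem_benderKnuthRun hlh hg (List.get_mem _ _)⟩
  · exact List.forall₂_same.mpr fun x _ => .inl rfl

theorem benderKnuthGroup_ne_nil (hlh : lo < hi) (hg : g ≠ []) :
    benderKnuthGroup lo hi g ≠ [] := by
  have := (forall₂_benderKnuthGroup hlh g).length_eq
  exact fun h => hg (List.eq_nil_of_length_eq_zero (by rw [this, h, List.length_nil]))

theorem isActive_iff_of_mem_benderKnuthGroup (hlh : lo < hi)
    (hg : ∀ x ∈ g, ∀ z ∈ g, (IsActive lo hi x ↔ IsActive lo hi z))
    {x z : α} (hx : x ∈ benderKnuthGroup lo hi g) (hz : z ∈ g) :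
    IsActive lo hi x ↔ IsActive lo hi z := by
  unfold benderKnuthGroup at hx
  split_ifs at hx with h
  · exact iff_of_true (isActive_of_mem_benderKnuthRun hlh h hx) (h z hz)
  · exact hg x hx z hz

theorem benderKnuthGroup_benderKnuthGroup (hlh : lo < hi) (g : List α) :
    benderKnuthGroup lo hi (benderKnuthGroup lo hi g) = g := by
  by_cases h : ∀ x ∈ g, IsActive lo hi x
  · have hF : benderKnuthGroup lo hi g = benderKnuthRun lo hi g := if_pos h
    rw [hF, benderKnuthGroup, if_pos fun x hx => isActive_of_mem_benderKnuthRun hlh h hx,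
      benderKnuthRun_benderKnuthRun hlh h]
  · have hF : benderKnuthGroup lo hi g = g := if_neg h
    rw [hF, hF]

theorem filter_benderKnuthGroup (hlh : lo < hi) {p : α → Bool}
    (hp : ∀ x, IsActive lo hi x → p x = false) (g : List α) :
    (benderKnuthGroup lo hi g).filter p = g.filter p := by
  unfold benderKnuthGroup
  split_ifs with h
  · rw [List.filter_eq_nil_iff.mpr fun x hx => by
        simp [hp x (isActive_of_mem_benderKnuthRun hlh h hx)],
      List.filter_eq_nil_iff.mpr fun x hx => by simp [hp x (h x hx)]]
  · rfl

theorem count_benderKnuthGroup (hlh : lo < hi)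
    (hg : ∀ x ∈ g, ∀ z ∈ g, (IsActive lo hi x ↔ IsActive lo hi z)) :
    (benderKnuthGroup lo hi g).count lo = g.count hi ∧
      (benderKnuthGroup lo hi g).count hi = g.count lo := by
  unfold benderKnuthGroup
  split_ifs with h
  · exact count_benderKnuthRun hlh h
  · obtain ⟨x, hx, hxa⟩ := not_forall₂.mp h
    have hna : ∀ z ∈ g, ¬IsActive lo hi z := fun z hz hza => hxa ((hg x hx z hz).mpr hza)
    rw [List.count_eq_zero.mpr fun h => hna _ h (.inl rfl),
      List.count_eq_zero.mpr fun h => hna _ h (.inr rfl)]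
    exact ⟨rfl, rfl⟩

theorem descentsFrom_benderKnuthGroup (hlh : lo ⋖ hi)
    (hg : ∀ x ∈ g, ∀ z ∈ g, (IsActive lo hi x ↔ IsActive lo hi z)) {y y' : α}
    (hy : SameUpToActive lo hi y y')
    (hyg : ∀ z ∈ g, ¬(IsActive lo hi y ∧ IsActive lo hi z)) :
    descentsFrom y' (benderKnuthGroup lo hi g) = descentsFrom y g := by
  obtain _ | ⟨a, l⟩ := g
  · rw [List.forall₂_nil_left_iff.mp (forall₂_benderKnuthGroup hlh.lt [])]
    rfl
  rcases hF : benderKnuthGroup lo hi (a :: l) with _ | ⟨a', l'⟩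
  · simpa [hF] using (forall₂_benderKnuthGroup hlh.lt (a :: l)).length_eq
  have hrel := forall₂_benderKnuthGroup hlh.lt (a :: l)
  rw [hF, List.forall₂_cons] at hrel
  simp only [descentsFrom, List.cons.injEq, decide_eq_decide]
  refine ⟨(lt_iff_lt_of_sameUpToActive hlh hy hrel.1 (hyg a (by simp))).symm, ?_⟩
  by_cases h : ∀ x ∈ a :: l, IsActive lo hi x
  · have := descentsFrom_benderKnuthRun hlh.lt h
    rw [benderKnuthGroup, if_pos h] at hF
    rw [hF] at this
    exact (List.cons.inj this).2
  · rw [benderKnuthGroup, if_neg h] at hF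
    obtain ⟨rfl, rfl⟩ := List.cons.inj hF
    rfl

theorem flatten_activityRuns (lo hi : α) (w : List α) : (activityRuns lo hi w).flatten = w :=
  List.flatten_splitBy _ w

theorem isActive_iff_of_mem_activityRuns {w g : List α} (hg : g ∈ activityRuns lo hi w)
    {x z : α} (hx : x ∈ g) (hz : z ∈ g) : IsActive lo hi x ↔ IsActive lo hi z := by
  have hne := List.ne_nil_of_mem_splitBy hg
  have key : ∀ y ∈ g, IsActive lo hi y ↔ IsActive lo hi (g.head hne) :=
    List.IsChain.induction _ g (List.isChain_of_mem_splitBy hg)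
      (fun a b hab ha => by simp only [decide_eq_true_eq] at hab; exact hab.symm.trans ha)
      fun _ => Iff.rfl
  exact (key x hx).trans (key z hz).symm

theorem isChain_activityRuns (w : List α) :
    (activityRuns lo hi w).IsChain
      fun g h => ∀ x ∈ g, ∀ z ∈ h, ¬(IsActive lo hi x ↔ IsActive lo hi z) := by
  refine (List.isChain_getLast_head_splitBy _ w).imp_of_mem_imp
    fun g h hg hh ⟨hg0, hh0, hgh⟩ x hx z hz hxz => ?_
  simp only [decide_eq_false_iff_not] at hgh
  exact hgh ((isActive_iff_of_mem_activityRuns hg (List.getLast_mem hg0) hx).trans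
    (hxz.trans (isActive_iff_of_mem_activityRuns hh hz (List.head_mem hh0))))

theorem descentsFrom_flatMap_benderKnuthGroup (hlh : lo ⋖ hi) {G : List (List α)}
    (hG : ∀ g ∈ G, g ≠ [] ∧
      ∀ x ∈ g, ∀ z ∈ g, (IsActive lo hi x ↔ IsActive lo hi z))
    (hG' : G.IsChain fun g h => ∀ x ∈ g, ∀ z ∈ h, ¬(IsActive lo hi x ↔ IsActive lo hi z))
    {y y' : α} (hy : SameUpToActive lo hi y y')
    (hyG : ∀ g ∈ G.head?, ∀ z ∈ g, ¬(IsActive lo hi y ∧ IsActive lo hi z)) :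
    descentsFrom y' (G.flatMap (benderKnuthGroup lo hi)) = descentsFrom y G.flatten := by
  induction G generalizing y y' with
  | nil => rfl
  | cons g G ih =>
    obtain ⟨hg0, hgc⟩ := hG g (by simp)
    rw [List.isChain_cons] at hG'
    rw [List.flatMap_cons, List.flatten_cons, descentsFrom_append, descentsFrom_append,
      descentsFrom_benderKnuthGroup hlh hgc hy (hyG g rfl)]
    refine congrArg _ (ih (fun h hh => hG h (by simp [hh])) hG'.2
      ((forall₂_benderKnuthGroup hlh.lt g).getLastD hy) fun h hh z hz hyz => ?_)
    obtain ⟨a, l, rfl⟩ := List.exists_cons_of_ne_nil hg0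
    rw [List.getLastD_cons] at hyz
    exact hG'.1 h hh _ List.getLastD_mem_cons z hz (iff_of_true hyz.1 hyz.2)

theorem descentsFrom_benderKnuth (hlh : lo ⋖ hi) {y : α} (hy : ¬IsActive lo hi y)
    (w : List α) :
    descentsFrom y (benderKnuth lo hi w) = descentsFrom y w := by
  conv_rhs => rw [← flatten_activityRuns lo hi w]
  exact descentsFrom_flatMap_benderKnuthGroup hlh
    (fun g hg => ⟨List.ne_nil_of_mem_splitBy hg,
      fun x hx z hz => isActive_iff_of_mem_activityRuns hg hx hz⟩)
    (isChain_activityRuns w) (.inl rfl) fun _ _ _ _ h => hy h.1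

theorem forall₂_benderKnuth (hlh : lo < hi) (w : List α) :
    List.Forall₂ (SameUpToActive lo hi) w (benderKnuth lo hi w) := by
  conv_lhs => rw [← flatten_activityRuns lo hi w]
  exact List.rel_flatten (List.forall₂_map_right_iff.mpr
    (List.forall₂_same.mpr fun g _ => forall₂_benderKnuthGroup hlh g))

theorem filter_benderKnuth (hlh : lo < hi) {p : α → Bool}
    (hp : ∀ x, IsActive lo hi x → p x = false) (w : List α) :
    (benderKnuth lo hi w).filter p = w.filter p := by
  conv_rhs => rw [← flatten_activityRuns lo hi w]
  rw [benderKnuth, List.filter_flatMap, List.filter_flatten, List.flatMap_def]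
  exact congrArg _ (List.map_congr_left fun g _ => filter_benderKnuthGroup hlh hp g)

theorem count_benderKnuth_of_not_isActive (hlh : lo < hi) {x : α} (hx : ¬IsActive lo hi x)
    (w : List α) : (benderKnuth lo hi w).count x = w.count x := by
  simp only [List.count_eq_length_filter]
  rw [filter_benderKnuth hlh fun y hy => beq_false_of_ne fun h : y = x => hx (h ▸ hy)]

theorem count_benderKnuth (hlh : lo < hi) (w : List α) :
    (benderKnuth lo hi w).count lo = w.count hi ∧
      (benderKnuth lo hi w).count hi = w.count lo := by
  have hG := fun g (hg : g ∈ activityRuns lo hi w) => count_benderKnuthGroup hlh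
    fun x hx z hz => isActive_iff_of_mem_activityRuns hg hx hz
  have hw : ∀ a, w.count a = ((activityRuns lo hi w).map (List.count a)).sum := fun a => by
    conv_lhs => rw [← flatten_activityRuns lo hi w]
    exact List.count_flatten
  unfold benderKnuth
  rw [List.count_flatMap, List.count_flatMap, hw, hw]
  exact ⟨congrArg List.sum (List.map_congr_left fun g hg => (hG g hg).1),
    congrArg List.sum (List.map_congr_left fun g hg => (hG g hg).2)⟩

theorem activityRuns_benderKnuth (hlh : lo < hi) (w : List α) :
    activityRuns lo hi (benderKnuth lo hi w) =
      (activityRuns lo hi w).map (benderKnuthGroup lo hi) := by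
  have hgc : ∀ g ∈ activityRuns lo hi w, ∀ x ∈ g, ∀ z ∈ g,
      (IsActive lo hi x ↔ IsActive lo hi z) :=
    fun g hg x hx z hz => isActive_iff_of_mem_activityRuns hg hx hz
  rw [activityRuns, List.splitBy_eq_iff]
  refine ⟨rfl, fun h => ?_, fun m hm => ?_, ?_⟩
  · obtain ⟨g, hg, hgF⟩ := List.mem_map.mp h
    exact benderKnuthGroup_ne_nil hlh (List.ne_nil_of_mem_splitBy hg) hgF
  · obtain ⟨g, hg, rfl⟩ := List.mem_map.mp hm
    have h0 := List.head_mem (List.ne_nil_of_mem_splitBy hg)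
    refine List.Pairwise.isChain (List.pairwise_of_forall_mem_list fun x hx z hz => ?_)
    simpa using (isActive_iff_of_mem_benderKnuthGroup hlh (hgc g hg) hx h0).trans
      (isActive_iff_of_mem_benderKnuthGroup hlh (hgc g hg) hz h0).symm
  · rw [List.isChain_map]
    refine (isChain_activityRuns w).imp_of_mem_imp fun g h hg hh hgh => ?_
    have hg0 := List.ne_nil_of_mem_splitBy hg
    have hh0 := List.ne_nil_of_mem_splitBy hh
    refine ⟨benderKnuthGroup_ne_nil hlh hg0, benderKnuthGroup_ne_nil hlh hh0, ?_⟩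
    simp only [decide_eq_false_iff_not]
    refine fun hiff => hgh _ (List.head_mem hg0) _ (List.head_mem hh0) ?_
    exact (isActive_iff_of_mem_benderKnuthGroup hlh (hgc g hg) (List.getLast_mem _)
      (List.head_mem hg0)).symm.trans (hiff.trans (isActive_iff_of_mem_benderKnuthGroup hlh
        (hgc h hh) (List.head_mem _) (List.head_mem hh0)))

theorem benderKnuth_benderKnuth (hlh : lo < hi) (w : List α) :
    benderKnuth lo hi (benderKnuth lo hi w) = w := by
  rw [benderKnuth, activityRuns_benderKnuth hlh, List.flatMap_map,
    List.flatMap_congr (g := id) fun g _ => benderKnuthGroup_benderKnuthGroup hlh g,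
    List.flatMap_id, flatten_activityRuns]

end BenderKnuth

section Arrangements
variable {n k : ℕ}

def colorLetter (c : Fin k) : ℤ := -(((c : ℕ) : ℤ) + 1)

def rawWord (a : Arrangement n k) : List ℤ :=
  (List.finRange n).map fun i =>
    if a.1.1 i = i then colorLetter (a.1.2 i) else ((a.1.1 i : ℕ) : ℤ) + 1

theorem DEZset_eq_desSet_rawWord (a : Arrangement n k) : DEZset a = desSet (rawWord a) :=
  desSet_posReduce _

theorem Der_eq_posReduce_posPart_rawWord (a : Arrangement n k) :
    Der a = posReduce (posPart (rawWord a)) :=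
  posPart_posReduce _

@[simp] theorem length_rawWord (a : Arrangement n k) : (rawWord a).length = n := by simp [rawWord]

theorem getD_rawWord (a : Arrangement n k) (i : Fin n) :
    (rawWord a).getD i 0 =
      if a.1.1 i = i then colorLetter (a.1.2 i) else ((a.1.1 i : ℕ) : ℤ) + 1 := by
  simp [rawWord]

theorem colorLetter_neg (c : Fin k) : colorLetter c < 0 := by
  unfold colorLetter; omega

theorem colorLetter_injective : Function.Injective (colorLetter (k := k)) :=
  fun c d h => Fin.ext (by unfold colorLetter at h; omega)

theorem fixCount_eq_count (a : Arrangement n k) (c : Fin k) :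
    fixCount a c = (rawWord a).count (colorLetter c) := by
  rw [fixCount, rawWord, List.count, List.countP_map, List.countP_eq_length_filter,
    ← List.toFinset_card_of_nodup ((List.nodup_finRange n).filter _), List.toFinset_filter,
    List.toFinset_finRange, Nat.card_eq_fintype_card, Fintype.card_subtype]
  congr 1
  refine Finset.filter_congr fun i _ => ?_
  simp only [Function.comp_apply, beq_iff_eq]
  split_ifs with h
  · simp [h, colorLetter_injective.eq_iff, eq_comm]
  · have := colorLetter_neg c
    simp only [h, false_and, false_iff]
    omega

theorem rawWord_injective : Function.Injective (rawWord (n := n) (k := k)) := by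
  intro a b hab
  have key : ∀ i : Fin n,
      (if a.1.1 i = i then colorLetter (a.1.2 i) else ((a.1.1 i : ℕ) : ℤ) + 1) =
        if b.1.1 i = i then colorLetter (b.1.2 i) else ((b.1.1 i : ℕ) : ℤ) + 1 := fun i => by
    rw [← getD_rawWord, ← getD_rawWord, hab]
  have hab : ∀ i, a.1.1 i = b.1.1 i ∧ a.1.2 i = b.1.2 i := by
    intro i
    have hi := key i
    have := colorLetter_neg (a.1.2 i)
    have := colorLetter_neg (b.1.2 i)
    by_cases ha : a.1.1 i = i <;> by_cases hb : b.1.1 i = i <;>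
      simp only [ha, hb, if_true, if_false] at hi
    · exact ⟨ha.trans hb.symm, colorLetter_injective hi⟩
    · omega
    · omega
    · exact ⟨Fin.ext (by omega), Fin.ext ((a.2 i ha).trans (b.2 i hb).symm)⟩
  exact Subtype.ext (Prod.ext (Equiv.ext fun i => (hab i).1) (funext fun i => (hab i).2))

theorem colorLetter_covBy (i : Fin k) : colorLetter i.succ ⋖ colorLetter i.castSucc := by
  rw [Order.covBy_iff_add_one_eq]
  simp [colorLetter]

theorem not_isActive_colorLetter_of_pos {i : Fin k} {x : ℤ} (hx : 0 < x) :
    ¬IsActive (colorLetter i.succ) (colorLetter i.castSucc) x := by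
  have := colorLetter_neg i.succ
  have := colorLetter_neg i.castSucc
  rintro (rfl | rfl) <;> omega

theorem sameUpToActive_getD_benderKnuth_rawWord (i : Fin k) (a : Arrangement n (k + 1))
    (j : Fin n) :
    SameUpToActive (colorLetter i.succ) (colorLetter i.castSucc) ((rawWord a).getD j 0)
      ((benderKnuth (colorLetter i.succ) (colorLetter i.castSucc) (rawWord a)).getD j 0) :=
  (forall₂_benderKnuth (colorLetter_covBy i).lt _).getD (.inl rfl) j

theorem getD_benderKnuth_rawWord_of_ne (i : Fin k) (a : Arrangement n (k + 1)) {j : Fin n}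
    (hj : a.1.1 j ≠ j) :
    (benderKnuth (colorLetter i.succ) (colorLetter i.castSucc) (rawWord a)).getD j 0 =
      ((a.1.1 j : ℕ) : ℤ) + 1 := by
  have h := sameUpToActive_getD_benderKnuth_rawWord i a j
  rw [getD_rawWord, if_neg hj] at h
  rcases h with h | ⟨h, -⟩
  · exact h.symm
  · exact absurd h (not_isActive_colorLetter_of_pos (by omega))

def bkRecolor (i : Fin k) (a : Arrangement n (k + 1)) : Arrangement n (k + 1) :=
  ⟨(a.1.1, fun j =>
    let x := (benderKnuth (colorLetter i.succ) (colorLetter i.castSucc) (rawWord a)).getD j 0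
    if x = colorLetter i.succ then i.succ else if x = colorLetter i.castSucc then i.castSucc
    else a.1.2 j), fun j hj => by
    have := colorLetter_neg i.succ
    have := colorLetter_neg i.castSucc
    simp only [getD_benderKnuth_rawWord_of_ne i a hj]
    rw [if_neg (by omega), if_neg (by omega)]
    exact a.2 j hj⟩

theorem rawWord_bkRecolor (i : Fin k) (a : Arrangement n (k + 1)) :
    rawWord (bkRecolor i a) =
      benderKnuth (colorLetter i.succ) (colorLetter i.castSucc) (rawWord a) := by
  have hlen := (forall₂_benderKnuth (colorLetter_covBy i).lt (rawWord a)).length_eq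
  refine List.ext_getElem (by simp [← hlen]) fun j h₁ h₂ => ?_
  obtain ⟨j, rfl⟩ : ∃ J : Fin n, (J : ℕ) = j := ⟨⟨j, by simpa using h₁⟩, rfl⟩
  rw [← List.getD_eq_getElem _ 0 h₁, ← List.getD_eq_getElem _ 0 h₂, getD_rawWord]
  by_cases hfix : a.1.1 j = j
  · simp only [bkRecolor, hfix, if_true]
    split_ifs with h₁ h₂
    · exact h₁.symm
    · exact h₂.symm
    · have h := sameUpToActive_getD_benderKnuth_rawWord i a j
      rw [getD_rawWord, if_pos hfix] at h
      rcases h with h | ⟨-, h | h⟩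
      exacts [h, absurd h h₁, absurd h h₂]
  · simp only [bkRecolor, hfix, if_false]
    exact (getD_benderKnuth_rawWord_of_ne i a hfix).symm

theorem bkRecolor_involutive (i : Fin k) : Function.Involutive (bkRecolor (n := n) i) := fun a =>
  rawWord_injective (by
    rw [rawWord_bkRecolor, rawWord_bkRecolor, benderKnuth_benderKnuth (colorLetter_covBy i).lt])

theorem DEZset_bkRecolor (i : Fin k) (a : Arrangement n (k + 1)) :
    DEZset (bkRecolor i a) = DEZset a := by
  rw [DEZset_eq_desSet_rawWord, DEZset_eq_desSet_rawWord, rawWord_bkRecolor]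
  exact desSet_eq_of_descentsFrom_eq
    (descentsFrom_benderKnuth (colorLetter_covBy i) (not_isActive_colorLetter_of_pos one_pos) _)

theorem Der_bkRecolor (i : Fin k) (a : Arrangement n (k + 1)) : Der (bkRecolor i a) = Der a := by
  rw [Der_eq_posReduce_posPart_rawWord, Der_eq_posReduce_posPart_rawWord, rawWord_bkRecolor,
    posPart, posPart, filter_benderKnuth (colorLetter_covBy i).lt]
  rintro x (rfl | rfl) <;> simp [(colorLetter_neg _).not_gt]

theorem fixCount_bkRecolor (i : Fin k) (a : Arrangement n (k + 1)) (c : Fin (k + 1)) :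
    fixCount (bkRecolor i a) c = fixCount a (Equiv.swap i.castSucc i.succ c) := by
  have hlh := (colorLetter_covBy i).lt
  rw [fixCount_eq_count, fixCount_eq_count, rawWord_bkRecolor]
  rcases eq_or_ne c i.castSucc with rfl | h₁
  · rw [Equiv.swap_apply_left]; exact (count_benderKnuth hlh _).2
  rcases eq_or_ne c i.succ with rfl | h₂
  · rw [Equiv.swap_apply_right]; exact (count_benderKnuth hlh _).1
  rw [Equiv.swap_apply_of_ne_of_ne h₁ h₂]
  refine count_benderKnuth_of_not_isActive hlh ?_ _
  rintro (h | h)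
  exacts [h₂ (colorLetter_injective h), h₁ (colorLetter_injective h)]

end Arrangements

def realizableRecolorings (n k : ℕ) : Submonoid (Equiv.Perm (Fin k)) where
  carrier := {τ | ∃ E : Arrangement n k ≃ Arrangement n k, ∀ a,
    DEZset (E a) = DEZset a ∧ Der (E a) = Der a ∧ ∀ c, fixCount (E a) c = fixCount a (τ c)}
  one_mem' := ⟨Equiv.refl _, fun _ => ⟨rfl, rfl, fun _ => rfl⟩⟩
  mul_mem' := by
    rintro σ τ ⟨E, hE⟩ ⟨F, hF⟩
    refine ⟨E.trans F, fun a => ?_⟩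
    obtain ⟨h₁, h₂, h₃⟩ := hE a
    obtain ⟨h₁', h₂', h₃'⟩ := hF (E a)
    exact ⟨h₁'.trans h₁, h₂'.trans h₂, fun c => (h₃' c).trans (h₃ (τ c))⟩

theorem swap_castSucc_succ_mem_realizableRecolorings (n : ℕ) {k : ℕ} (i : Fin k) :
    Equiv.swap i.castSucc i.succ ∈ realizableRecolorings n (k + 1) :=
  ⟨(bkRecolor_involutive i).toPerm, fun a =>
    ⟨DEZset_bkRecolor i a, Der_bkRecolor i a, fixCount_bkRecolor i a⟩⟩

theorem realizableRecolorings_eq_top (n k : ℕ) : realizableRecolorings n k = ⊤ := by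
  cases k with
  | zero => exact eq_top_iff.mpr fun τ _ => Subsingleton.elim 1 τ ▸ one_mem _
  | succ k =>
    exact top_unique <| (Equiv.Perm.mclosure_swap_castSucc_succ k).ge.trans <|
      Submonoid.closure_le.mpr <| Set.range_subset_iff.mpr
        (swap_castSucc_succ_mem_realizableRecolorings n)

theorem stmt6_general (n k : ℕ) (m : Fin k → ℕ) (τ : Equiv.Perm (Fin k)) :
    ∃ Φ : {a : Arrangement n k // ∀ c, fixCount a c = m c} ≃
          {b : Arrangement n k // ∀ c, fixCount b c = m (τ c)},
      ∀ a, DEZset a.1 = DEZset (Φ a).1 ∧ Der a.1 = Der (Φ a).1 := by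
  obtain ⟨E, hE⟩ : τ ∈ realizableRecolorings n k :=
    realizableRecolorings_eq_top n k ▸ Submonoid.mem_top τ
  refine ⟨E.subtypeEquiv fun a => ?_, fun a => ⟨(hE a).1.symm, (hE a).2.1.symm⟩⟩
  simp only [(hE a).2.2]
  exact ⟨fun h c => h (τ c), fun h c => by simpa using h (τ.symm c)⟩

theorem stmt6 (n k : ℕ) (hn : 1 ≤ n) (hk : 1 ≤ k) (m : Fin k → ℕ) (τ : Equiv.Perm (Fin k)) :
    ∃ Φ : {a : Arrangement n k // ∀ c, fixCount a c = m c} ≃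
          {b : Arrangement n k // ∀ c, fixCount b c = m (τ c)},
      ∀ a, DEZset a.1 = DEZset (Φ a).1 ∧ Der a.1 = Der (Φ a).1 :=
  stmt6_general n k m τ

end KArr
end

section
/- For every k-arrangement a ∈ A_n^k whose weak derangement part Der_k(a) is non-empty, the number of slots of type I equals the number of slots of type II: t_1(a) = t_2(a). -/
open scoped Classical

namespace KArr

/-! Slot types are governed by the excedance pattern alone. Here `e_j = E` compares `w_j` with the
number `p_j` of positive letters among `w_1, …, w_j`, and `p_j` grows by at most one per letter;
so, the positive letters being distinct, a descent is forced at an `(E, N)` transition and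
impossible at an `(N, E)` transition. The transitions `E → N` and `N → E` along
`e_0, …, e_{m+1}` alternate between the two boundary values `E`, so they are equally many. -/

def posCount (w : List ℤ) (j : ℕ) : ℕ := ((w.take j).filter fun x => decide (0 < x)).length

lemma isExcAt_iff (w : List ℤ) (j : ℕ) :
    isExcAt w j ↔ (posCount w (j + 1) : ℤ) < w.getD j 0 :=
  Iff.rfl

lemma posCount_le_succ (w : List ℤ) (j : ℕ) : posCount w j ≤ posCount w (j + 1) := by
  unfold posCount
  rw [List.take_add_one, List.filter_append, List.length_append]
  omega

lemma posCount_succ_le (w : List ℤ) (j : ℕ) : posCount w (j + 1) ≤ posCount w j + 1 := by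
  unfold posCount
  rw [List.take_add_one, List.filter_append, List.length_append]
  have : (w[j]?.toList.filter fun x => decide (0 < x)).length ≤ 1 :=
    (List.length_filter_le _ _).trans (by cases w[j]? <;> simp)
  omega

lemma slotE_iff_isExcAt {w : List ℤ} {i : ℕ} (hi0 : i ≠ 0) (hi : i ≤ w.length) :
    slotE w i ↔ isExcAt w (i - 1) := by
  unfold slotE
  constructor
  · rintro (h | h | h)
    · exact absurd h hi0
    · omega
    · exact h
  · exact fun h => Or.inr (Or.inr h)

lemma posReduce_rank_lt {w : List ℤ} {u v : ℤ} (hv : v ∈ w) (hu : 0 < u) (huv : u < v) :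
    (w.toFinset.filter fun y => 0 < y ∧ y ≤ u).card <
      (w.toFinset.filter fun y => 0 < y ∧ y ≤ v).card := by
  refine Finset.card_lt_card ⟨fun y hy => ?_, fun hsub => ?_⟩
  · simp only [Finset.mem_filter] at hy ⊢
    exact ⟨hy.1, hy.2.1, hy.2.2.trans huv.le⟩
  · have hv_mem : v ∈ w.toFinset.filter fun y => 0 < y ∧ y ≤ v :=
      Finset.mem_filter.mpr ⟨List.mem_toFinset.mpr hv, hu.trans huv, le_rfl⟩
    have := (Finset.mem_filter.mp (hsub hv_mem)).2.2
    omega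

lemma posReduce_pairwise_pos_ne {w : List ℤ}
    (hw : w.Pairwise fun x y => 0 < x → 0 < y → x ≠ y) :
    (posReduce w).Pairwise fun x y => 0 < x → 0 < y → x ≠ y := by
  unfold posReduce
  rw [List.pairwise_map]
  refine hw.imp_of_mem fun {x y} hx hy hxy hfx hfy hfxy => ?_
  have hx0 : 0 < x := by by_contra h; simp only [if_neg h] at hfx; exact h hfx
  have hy0 : 0 < y := by by_contra h; simp only [if_neg h] at hfy; exact h hfy
  simp only [if_pos hx0, if_pos hy0, Nat.cast_inj] at hfxy
  rcases (hxy hx0 hy0).lt_or_gt with hlt | hlt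
  · exact (posReduce_rank_lt hy hx0 hlt).ne hfxy
  · exact (posReduce_rank_lt hx hy0 hlt).ne hfxy.symm

lemma wDer_pairwise_pos_ne {n k : ℕ} (a : Arrangement n k) :
    (wDer a).Pairwise fun x y => 0 < x → 0 < y → x ≠ y := by
  refine List.Pairwise.sublist List.filter_sublist (posReduce_pairwise_pos_ne ?_)
  rw [List.pairwise_map]
  refine (List.nodup_finRange n).imp fun {i j} hij hi hj hval => hij ?_
  split_ifs at hi hj hval <;> try omega
  exact a.1.1.injective (Fin.ext (by omega))

lemma getD_ne_getD_of_pos {w : List ℤ} (hw : w.Pairwise fun x y => 0 < x → 0 < y → x ≠ y)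
    {i j : ℕ} (hij : i < j) (hj : j < w.length) (hi0 : 0 < w.getD i 0) (hj0 : 0 < w.getD j 0) :
    w.getD i 0 ≠ w.getD j 0 := by
  rw [List.getD_eq_getElem _ _ (hij.trans hj), List.getD_eq_getElem _ _ hj] at *
  exact List.pairwise_iff_getElem.mp hw i j _ hj hij hi0 hj0

lemma typeI_iff {w : List ℤ} (hw : w.Pairwise fun x y => 0 < x → 0 < y → x ≠ y) {i : ℕ}
    (hi : i ≤ w.length) : typeI w i ↔ slotE w i ∧ ¬ slotE w (i + 1) := by
  refine ⟨fun h => h.2, fun ⟨hE, hN⟩ => ⟨?_, hE, hN⟩⟩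
  rcases Nat.eq_zero_or_pos i with rfl | hi0
  · exact Or.inl rfl
  have hlt : i < w.length := lt_of_le_of_ne hi fun h => hN (Or.inr (Or.inl (by omega)))
  rw [slotE_iff_isExcAt hi0.ne' hi, isExcAt_iff, Nat.sub_add_cancel hi0] at hE
  rw [slotE_iff_isExcAt (by omega) (by omega), Nat.add_sub_cancel, isExcAt_iff] at hN
  have hp_step := posCount_succ_le w i
  refine Or.inr ⟨hlt, ?_⟩
  by_cases hpos : 0 < w.getD i 0
  · have := getD_ne_getD_of_pos hw (Nat.sub_lt hi0 one_pos) hlt (by omega) hpos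
    omega
  · omega

lemma typeII_iff {w : List ℤ} {i : ℕ} (hi : i ≤ w.length) :
    typeII w i ↔ ¬ slotE w i ∧ slotE w (i + 1) := by
  refine ⟨fun h => h.2, fun ⟨hN, hE⟩ => ⟨?_, hN, hE⟩⟩
  rintro (rfl | ⟨hlt, hdesc⟩)
  · exact hN (Or.inl rfl)
  have hi0 : i ≠ 0 := fun h => hN (Or.inl h)
  rw [slotE_iff_isExcAt hi0 hi, isExcAt_iff, Nat.sub_add_cancel (Nat.pos_of_ne_zero hi0)] at hN
  rw [slotE_iff_isExcAt (by omega) (by omega), Nat.add_sub_cancel, isExcAt_iff] at hE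
  have hp_mono := posCount_le_succ w i
  omega

lemma card_transitions_eq (b : ℕ → Prop) (m : ℕ) (h0 : b 0) (hm : b (m + 1)) :
    Nat.card {i : Fin (m + 1) // b i ∧ ¬ b (i + 1)} =
      Nat.card {i : Fin (m + 1) // ¬ b i ∧ b (i + 1)} := by
  have card_eq_sum (P : ℕ → Prop) [DecidablePred P] :
      (Nat.card {i : Fin (m + 1) // P i} : ℤ) =
        ∑ i ∈ Finset.range (m + 1), if P i then 1 else 0 := by
    rw [Nat.card_eq_fintype_card, Fintype.card_subtype, Finset.card_filter, Nat.cast_sum,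
      ← Fin.sum_univ_eq_sum_range (fun i => if P i then (1 : ℤ) else 0)]
    simp only [Nat.cast_ite, Nat.cast_one, Nat.cast_zero]
  have telescope := Finset.sum_range_sub' (fun i => if b i then (1 : ℤ) else 0) (m + 1)
  simp only [if_pos h0, if_pos hm, sub_self] at telescope
  have hstep (i : ℕ) : ((if b i then (1 : ℤ) else 0) - if b (i + 1) then 1 else 0) =
      (if b i ∧ ¬ b (i + 1) then 1 else 0) - if ¬ b i ∧ b (i + 1) then 1 else 0 := by
    by_cases b i <;> by_cases b (i + 1) <;> simp [*]
  rw [Finset.sum_congr rfl fun i _ => hstep i, Finset.sum_sub_distrib, sub_eq_zero,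
    ← card_eq_sum fun i => b i ∧ ¬ b (i + 1), ← card_eq_sum fun i => ¬ b i ∧ b (i + 1)]
    at telescope
  exact_mod_cast telescope

theorem stmt8_general (n k : ℕ) (a : Arrangement n k) :
    Nat.card {i : Fin ((wDer a).length + 1) // typeI (wDer a) (i : ℕ)} =
    Nat.card {i : Fin ((wDer a).length + 1) // typeII (wDer a) (i : ℕ)} := by
  have hw := wDer_pairwise_pos_ne a
  rw [Nat.card_congr (Equiv.subtypeEquivRight fun i => typeI_iff hw (Nat.lt_succ_iff.mp i.isLt)),
    Nat.card_congr (Equiv.subtypeEquivRight fun i => typeII_iff (Nat.lt_succ_iff.mp i.isLt))]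
  exact card_transitions_eq (slotE (wDer a)) _ (Or.inl rfl) (Or.inr (Or.inl rfl))

theorem stmt8 (n k : ℕ) (a : Arrangement n k) (h : wDer a ≠ []) :
    Nat.card {i : Fin ((wDer a).length + 1) // typeI (wDer a) (i : ℕ)} =
    Nat.card {i : Fin ((wDer a).length + 1) // typeII (wDer a) (i : ℕ)} :=
  stmt8_general n k a

end KArr
end

section
/- For n ≥ 1 let C_n(t,p) = Σ_{D ∈ D_n} t^{seg(D)} p^{lseg(D)} ∈ ℚ[t,p], and let C = C(t,p;x) = p + Σ_{n≥1} C_n(t,p) x^n, a formal power series in x with coefficients in ℚ[t,p]. Let C₁ = C(t,1;x) denote the series obtained by substituting p = 1. Then t p² x² C₁² + p x (C − p x C − p) C₁ − (C − p x C − p) = 0. -/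
open scoped Classical

namespace KArr

noncomputable def Cgf : PowerSeries (MvPolynomial (Fin 2) ℚ) :=
  PowerSeries.mk fun n =>
    if n = 0 then MvPolynomial.X 1
    else ∑ f ∈ DyckFinset n,
      (MvPolynomial.X 0) ^ segNum (hList f) * (MvPolynomial.X 1) ^ lsegNum (hList f)

/-- The substitution `p = 1` (where `t = X 0`, `p = X 1`). -/
noncomputable def subP1 : MvPolynomial (Fin 2) ℚ →+* MvPolynomial (Fin 2) ℚ :=
  (MvPolynomial.aeval fun i : Fin 2 =>
    if i = 0 then (MvPolynomial.X 0 : MvPolynomial (Fin 2) ℚ) else 1).toRingHom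

/-!
Put `y = p x C₁` and use 0-based height sequences, so that Dyck paths are the weakly increasing
`e` with `e_i < i + 1`. A Dyck path with `e_1 > 0` is `0` followed by a raised Dyck path, which
multiplies its weight by `p`. Otherwise it begins with a run of `m ≥ 2` zeros, contributing
`t p^m`, followed by a raised sequence with `e_i < i + m`. Cutting such a sequence at its first
index with `e_i ≥ i + 1` splits it into a Dyck path and a shifted sequence with `e_i < i + m - 1`,
so these sequences, weighted by `t^seg`, are counted by `C₁^m`. Hence
`C - p x C - p = ∑_{m ≥ 2} t y^m`, that is `(C - p x C - p) (1 - y) = t y²`.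
-/

end KArr

open Finset

lemma PowerSeries.mul_one_sub_eq_of_coeff_eq_sum {R : Type*} [CommRing R] {S a y : PowerSeries R}
    {k : ℕ} (hy : PowerSeries.X ∣ y)
    (hS : ∀ n, PowerSeries.coeff n S = ∑ m ∈ Icc k n, PowerSeries.coeff n (a * y ^ m)) :
    S * (1 - y) = a * y ^ k := by
  have hpow (m : ℕ) : PowerSeries.X ^ m ∣ a * y ^ m := (pow_dvd_pow_of_dvd hy m).mul_left a
  ext n
  set N := n + k + 1
  -- `S` agrees with the truncated geometric series `a * ∑_{k ≤ m < N} y ^ m` below degree `N`.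
  have hG : PowerSeries.X ^ N ∣ S - a * ∑ m ∈ Ico k N, y ^ m := by
    refine PowerSeries.X_pow_dvd_iff.2 fun j hj => ?_
    rw [map_sub, Finset.mul_sum, map_sum, hS, sub_eq_zero]
    refine Finset.sum_subset (Finset.Icc_subset_Ico_right (by omega)) fun m hm hm' => ?_
    simp only [Finset.mem_Ico, Finset.mem_Icc, not_and, not_le] at hm hm'
    exact PowerSeries.X_pow_dvd_iff.1 (hpow m) j (hm' hm.1)
  have hsplit :
      S * (1 - y) - a * y ^ k = (S - a * ∑ m ∈ Ico k N, y ^ m) * (1 - y) - a * y ^ N := by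
    linear_combination (-a) * geom_sum_Ico_mul y (show k ≤ N by omega)
  rw [← sub_eq_zero, ← map_sub, hsplit]
  exact PowerSeries.X_pow_dvd_iff.1 (dvd_sub (hG.mul_right _) (hpow N)) n (by omega)

namespace KArr

lemma segNum_nil : segNum [] = 0 := rfl

lemma lsegNum_nil : lsegNum [] = 1 := rfl

lemma segNum_cons (x : ℕ) (l : List ℕ) :
    segNum (x :: l) = segNum l + if l.head? = some x ∧ l.tail.head? ≠ some x then 1 else 0 := by
  rcases l with _ | ⟨y, l⟩
  · simp [segNum]
  simp only [segNum, ← List.countP_eq_length_filter, List.length_cons, List.range_succ_eq_map,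
    List.countP_cons, List.countP_map, List.map_cons, List.map_map]
  rcases l with _ | ⟨z, l⟩ <;> simp [Function.comp_def] <;> split_ifs <;> omega

lemma lsegNum_cons (x : ℕ) (l : List ℕ) :
    lsegNum (x :: l) =
      if l.head? = some x ∧ l.tail.head? ≠ some x then 2 else lsegNum l + 1 := by
  rcases l with _ | ⟨y, l⟩
  · simp [lsegNum, List.range_succ_eq_map]
  simp only [lsegNum, List.headD_eq_head?_getD, List.head?_filter, List.length_cons,
    List.range_succ_eq_map, List.find?_cons, List.find?_map, List.map_cons, List.map_map]
  simp [Function.comp_def]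
  generalize hF : List.find? _ (List.range l.length) = F
  rcases F with _ | j
  -- the index `length + 1` always passes the filter, so the search cannot fail
  · rcases l with _ | ⟨z, l⟩
    · simp; split <;> simp_all [eq_comm]
    · have := List.find?_eq_none.mp hF l.length (by simp)
      simp at this
  · clear hF
    rcases l with _ | ⟨z, l⟩ <;> simp <;> split_ifs <;> (repeat' split) <;> simp_all

lemma segNum_map {f : ℕ → ℕ} (hf : Function.Injective f) (l : List ℕ) :
    segNum (l.map f) = segNum l := by
  induction l with
  | nil => rfl
  | cons x l ih => simp [segNum_cons, ih, List.head?_map, hf.eq_iff]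

lemma lsegNum_map {f : ℕ → ℕ} (hf : Function.Injective f) (l : List ℕ) :
    lsegNum (l.map f) = lsegNum l := by
  induction l with
  | nil => rfl
  | cons x l ih => simp [lsegNum_cons, ih, List.head?_map, hf.eq_iff]

lemma segNum_append {a b : List ℕ} (h : ∀ x ∈ a.getLast?, ∀ y ∈ b.head?, x ≠ y) :
    segNum (a ++ b) = segNum a + segNum b := by
  induction a with
  | nil => simp [segNum_nil]
  | cons x a ih =>
    rcases a with _ | ⟨y, a⟩
    · have hb : b.head? ≠ some x := fun hb => h x (by simp) x hb rfl
      rw [List.cons_append, List.nil_append, segNum_cons x, segNum_cons x]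
      simp [hb, segNum_nil]
    rw [List.getLast?_cons_cons] at h
    rw [List.cons_append, segNum_cons, ih h, segNum_cons x]
    rcases a with _ | ⟨z, a⟩
    · have hb : b.head? ≠ some y := fun hb => h y (by simp) y hb rfl
      by_cases hxy : y = x <;> simp_all
      omega
    · simp only [List.cons_append, List.head?_cons, Option.some.injEq, List.tail_cons, ne_eq]
      omega

lemma segNum_append_map_add {h f : List ℕ} {c : ℕ} (hc : ∀ x ∈ h, x < c) :
    segNum (h ++ f.map (· + c)) = segNum h + segNum f := by
  rw [segNum_append, segNum_map (add_left_injective c)]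
  intro x hx y hy
  obtain ⟨z, -, rfl⟩ := List.mem_map.1 (List.mem_of_head? hy)
  have := hc x (List.mem_of_getLast? hx)
  omega

lemma segNum_replicate_append {x m : ℕ} (hm : 2 ≤ m) {l : List ℕ} (hl : l.head? ≠ some x) :
    segNum (List.replicate m x ++ l) = segNum l + 1 := by
  induction m, hm using Nat.le_induction with
  | base => simp [segNum_cons, hl]
  | succ m hm ih =>
    obtain ⟨k, rfl⟩ := Nat.exists_eq_add_of_le' hm
    simp_all [List.replicate_succ, segNum_cons]

lemma lsegNum_replicate_append {x m : ℕ} (hm : 2 ≤ m) {l : List ℕ} (hl : l.head? ≠ some x) :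
    lsegNum (List.replicate m x ++ l) = m := by
  induction m, hm using Nat.le_induction with
  | base => simp [lsegNum_cons, hl]
  | succ m hm ih =>
    obtain ⟨k, rfl⟩ := Nat.exists_eq_add_of_le' hm
    simp_all [List.replicate_succ, lsegNum_cons]

/-- `StrictlyBelow m e` says `e_i < m + i` for every (0-based) index `i`; the height sequences of
Dyck paths are the weakly increasing lists `e` with `StrictlyBelow 1 e`. -/
def StrictlyBelow : ℕ → List ℕ → Prop
  | _, [] => True
  | m, a :: e => a < m ∧ StrictlyBelow (m + 1) e

lemma strictlyBelow_append {m : ℕ} {a b : List ℕ} :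
    StrictlyBelow m (a ++ b) ↔ StrictlyBelow m a ∧ StrictlyBelow (m + a.length) b := by
  induction a generalizing m with
  | nil => simp [StrictlyBelow]
  | cons x a ih => simp [StrictlyBelow, ih, and_assoc, Nat.add_right_comm, Nat.add_assoc]

lemma strictlyBelow_map_add {m c : ℕ} {e : List ℕ} :
    StrictlyBelow (m + c) (e.map (· + c)) ↔ StrictlyBelow m e := by
  induction e generalizing m with
  | nil => simp [StrictlyBelow]
  | cons x e ih => simp [StrictlyBelow, ← ih, Nat.add_right_comm]

lemma StrictlyBelow.mono {m m' : ℕ} {e : List ℕ} (h : StrictlyBelow m e) (hm : m ≤ m') :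
    StrictlyBelow m' e := by
  induction e generalizing m m' with
  | nil => trivial
  | cons x e ih => exact ⟨h.1.trans_le hm, ih h.2 (by omega)⟩

lemma strictlyBelow_replicate_zero {m k : ℕ} : StrictlyBelow (m + 1) (List.replicate k 0) := by
  induction k generalizing m with
  | zero => trivial
  | succ k ih => exact ⟨by omega, ih⟩

lemma StrictlyBelow.lt_add_length {m : ℕ} {e : List ℕ} (h : StrictlyBelow m e) :
    ∀ x ∈ e, x < m + e.length := by
  induction e generalizing m with
  | nil => simp
  | cons y e ih =>
    simp only [List.mem_cons, forall_eq_or_imp, List.length_cons]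
    exact ⟨by have := h.1; omega, fun x hx => by have := ih h.2 x hx; omega⟩

lemma strictlyBelow_ofFn {m n : ℕ} {g : Fin n → ℕ} :
    StrictlyBelow m (List.ofFn g) ↔ ∀ i, g i < m + i := by
  induction n generalizing m with
  | zero => simp [StrictlyBelow]
  | succ n ih => simp [List.ofFn_succ, StrictlyBelow, ih, Fin.forall_fin_succ, Nat.add_assoc,
      Nat.add_comm 1]

def belowLists : ℕ → ℕ → Finset (List ℕ)
  | _, 0 => {[]}
  | m, L + 1 => (Finset.range m).biUnion fun a => (belowLists (m + 1) L).image (List.cons a)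

lemma mem_belowLists {m L : ℕ} {e : List ℕ} :
    e ∈ belowLists m L ↔ e.length = L ∧ StrictlyBelow m e := by
  induction L generalizing m e with
  | zero => cases e <;> simp [belowLists, StrictlyBelow]
  | succ L ih => cases e <;> simp [belowLists, StrictlyBelow, ih]; tauto

def paths (m L : ℕ) : Finset (List ℕ) := (belowLists m L).filter (List.Pairwise (· ≤ ·))

lemma mem_paths {m L : ℕ} {e : List ℕ} :
    e ∈ paths m L ↔ e.length = L ∧ e.Pairwise (· ≤ ·) ∧ StrictlyBelow m e := by
  simp only [paths, mem_filter, mem_belowLists]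
  tauto

lemma paths_zero (m : ℕ) : paths m 0 = {[]} := rfl

/-- Splits `e` at the first index `i` with `e_i ≥ k + i`. -/
def exitSplit : ℕ → List ℕ → List ℕ × List ℕ
  | _, [] => ([], [])
  | k, a :: e => if a < k then Prod.map (List.cons a) id (exitSplit (k + 1) e) else ([], a :: e)

lemma exitSplit_fst_append_snd (k : ℕ) (e : List ℕ) :
    (exitSplit k e).1 ++ (exitSplit k e).2 = e := by
  induction e generalizing k with
  | nil => rfl
  | cons a e ih => unfold exitSplit; split_ifs <;> simp [ih]

lemma strictlyBelow_exitSplit_fst (k : ℕ) (e : List ℕ) : StrictlyBelow k (exitSplit k e).1 := by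
  induction e generalizing k with
  | nil => trivial
  | cons a e ih => unfold exitSplit; split_ifs with h <;> simp [StrictlyBelow, h, ih]

lemma le_head_exitSplit_snd (k : ℕ) (e : List ℕ) :
    ∀ x ∈ (exitSplit k e).2.head?, k + (exitSplit k e).1.length ≤ x := by
  induction e generalizing k with
  | nil => simp [exitSplit]
  | cons a e ih =>
    unfold exitSplit
    split_ifs with h
    · intro x hx
      have := ih (k + 1) x hx
      simp only [Prod.map_fst, List.length_cons]
      omega
    · simp only [List.head?_cons, Option.mem_def, Option.some.injEq, List.length_nil, add_zero,
        forall_eq']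
      omega

lemma exitSplit_append {k : ℕ} {h f : List ℕ} (hh : StrictlyBelow k h)
    (hf : ∀ x ∈ f.head?, k + h.length ≤ x) : exitSplit k (h ++ f) = (h, f) := by
  induction h generalizing k with
  | nil =>
    rcases f with _ | ⟨a, f⟩
    · rfl
    · have : ¬ a < k := by simpa using hf a rfl
      simp [exitSplit, this]
  | cons a h ih =>
    simp only [List.cons_append, exitSplit, if_pos hh.1]
    rw [ih hh.2 (fun x hx => by have := hf x hx; simp only [List.length_cons] at this; omega)]
    rfl

lemma head_le_of_pairwise {l : List ℕ} (hl : l.Pairwise (· ≤ ·)) {a : ℕ}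
    (ha : a ∈ l.head?) :
    ∀ x ∈ l, a ≤ x := by
  rcases l with _ | ⟨b, l⟩
  · simp at ha
  · simp only [List.head?_cons, Option.mem_some_iff] at ha
    subst ha
    simp only [List.mem_cons, forall_eq_or_imp, le_refl, true_and]
    exact (List.pairwise_cons.mp hl).1

lemma map_sub_map_add {c : ℕ} {e : List ℕ} (h : ∀ x ∈ e, c ≤ x) :
    (e.map (· - c)).map (· + c) = e := by
  rw [List.map_map]
  exact (List.map_congr_left fun x hx => Nat.sub_add_cancel (h x hx)).trans (List.map_id e)

lemma strictlyBelow_map_sub {m c : ℕ} {e : List ℕ} (h : ∀ x ∈ e, c ≤ x) :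
    StrictlyBelow m (e.map (· - c)) ↔ StrictlyBelow (m + c) e := by
  conv_rhs => rw [← map_sub_map_add h]
  exact strictlyBelow_map_add.symm

lemma pairwise_le_map_add {c : ℕ} {e : List ℕ} :
    (e.map (· + c)).Pairwise (· ≤ ·) ↔ e.Pairwise (· ≤ ·) := by
  simp [List.pairwise_map]

lemma pairwise_le_map_sub {c : ℕ} {e : List ℕ} (h : e.Pairwise (· ≤ ·)) :
    (e.map (· - c)).Pairwise (· ≤ ·) :=
  h.map _ fun _ _ hab => Nat.sub_le_sub_right hab c

lemma length_add_one_le_of_mem_exitSplit_snd {e : List ℕ} (he : e.Pairwise (· ≤ ·)) :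
    ∀ x ∈ (exitSplit 1 e).2, (exitSplit 1 e).1.length + 1 ≤ x := by
  rcases hg : (exitSplit 1 e).2.head? with _ | a
  · simp_all
  · have hsorted : (exitSplit 1 e).2.Pairwise (· ≤ ·) := by
      rw [← exitSplit_fst_append_snd 1 e, List.pairwise_append] at he
      exact he.2.1
    have := le_head_exitSplit_snd 1 e a (by rw [hg]; rfl)
    exact fun x hx => by have := head_le_of_pairwise hsorted (by rw [hg]; rfl) x hx; omega

theorem sum_paths_succ {M : Type*} [AddCommMonoid M] (F : List ℕ → M) (m L : ℕ) :
    ∑ e ∈ paths (m + 1) L, F e = ∑ jk ∈ antidiagonal L,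
      ∑ h ∈ paths 1 jk.1, ∑ f ∈ paths m jk.2, F (h ++ f.map (· + (jk.1 + 1))) := by
  let split (e : List ℕ) : (_ : ℕ × ℕ) × List ℕ × List ℕ :=
    ⟨((exitSplit 1 e).1.length, (exitSplit 1 e).2.length),
      ((exitSplit 1 e).1, (exitSplit 1 e).2.map (· - ((exitSplit 1 e).1.length + 1)))⟩
  let glue (x : (_ : ℕ × ℕ) × List ℕ × List ℕ) : List ℕ :=
    x.2.1 ++ x.2.2.map (· + (x.1.1 + 1))
  have glue_split : ∀ e ∈ paths (m + 1) L, glue (split e) = e := fun e he => by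
    simp only [glue, split]
    rw [map_sub_map_add (length_add_one_le_of_mem_exitSplit_snd (mem_paths.1 he).2.1),
      exitSplit_fst_append_snd]
  calc ∑ e ∈ paths (m + 1) L, F e
      = ∑ x ∈ (antidiagonal L).sigma fun jk => paths 1 jk.1 ×ˢ paths m jk.2,
          F (glue x) := by
        refine Finset.sum_nbij' split glue ?_ ?_ glue_split ?_ ?_
        · intro e he
          obtain ⟨hlen, hsort, hbelow⟩ := mem_paths.1 he
          have hg := length_add_one_le_of_mem_exitSplit_snd hsort
          rw [← exitSplit_fst_append_snd 1 e] at hlen hsort hbelow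
          rw [List.pairwise_append] at hsort
          rw [strictlyBelow_append] at hbelow
          simp only [split, Finset.mem_sigma, HasAntidiagonal.mem_antidiagonal, Finset.mem_product,
            mem_paths, List.length_map]
          refine ⟨by simpa using hlen, ⟨trivial, hsort.1, strictlyBelow_exitSplit_fst 1 e⟩,
            ⟨trivial, pairwise_le_map_sub hsort.2.1, (strictlyBelow_map_sub hg).2 ?_⟩⟩
          rw [← Nat.add_assoc, Nat.add_right_comm]
          exact hbelow.2
        · rintro ⟨⟨j, k⟩, h, f⟩ hx
          simp only [Finset.mem_sigma, HasAntidiagonal.mem_antidiagonal, Finset.mem_product,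
            mem_paths] at hx
          obtain ⟨hjk, ⟨rfl, hsort, hbelow⟩, rfl, fsort, fbelow⟩ := hx
          simp only [glue, mem_paths, List.length_append, List.length_map, List.pairwise_append,
            strictlyBelow_append]
          refine ⟨hjk, ⟨hsort, pairwise_le_map_add.2 fsort, fun a ha b hb => ?_⟩,
            hbelow.mono (by omega), ?_⟩
          · obtain ⟨c, -, rfl⟩ := List.mem_map.1 hb
            have := hbelow.lt_add_length a ha
            omega
          · rw [Nat.add_assoc, Nat.add_comm 1]
            exact strictlyBelow_map_add.2 fbelow
        · rintro ⟨⟨j, k⟩, h, f⟩ hx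
          simp only [Finset.mem_sigma, HasAntidiagonal.mem_antidiagonal, Finset.mem_product,
            mem_paths] at hx
          obtain ⟨-, ⟨rfl, -, hbelow⟩, rfl, -⟩ := hx
          simp only [glue, split]
          rw [exitSplit_append hbelow fun x hx => by
            obtain ⟨y, -, rfl⟩ := List.mem_map.1 (List.mem_of_head? hx)
            omega]
          simp [List.map_map, Function.comp_def]
        · intro e he; rw [glue_split e he]
    _ = _ := by simp only [Finset.sum_sigma, Finset.sum_product, glue]

lemma takeWhile_replicate_append_map_succ (m : ℕ) (e : List ℕ) :
    (List.replicate m 0 ++ e.map (· + 1)).takeWhile (· = 0) = List.replicate m 0 ∧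
      (List.replicate m 0 ++ e.map (· + 1)).dropWhile (· = 0) = e.map (· + 1) := by
  rw [List.takeWhile_append_of_pos (by simp), List.dropWhile_append_of_pos (by simp)]
  cases e <;> simp

lemma takeWhile_eq_zero_eq_replicate (d : List ℕ) :
    d.takeWhile (· = 0) = List.replicate (d.takeWhile (· = 0)).length 0 :=
  List.eq_replicate_iff.2 ⟨rfl, fun _ hb => by simpa using List.mem_takeWhile_imp hb⟩

lemma one_le_of_mem_dropWhile {d : List ℕ} (hd : d.Pairwise (· ≤ ·)) :
    ∀ x ∈ d.dropWhile (· = 0), 1 ≤ x := by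
  intro x hx
  obtain ⟨a, D, hD⟩ := List.exists_cons_of_ne_nil (List.ne_nil_of_mem hx)
  have ha : a ≠ 0 := by
    simpa [hD] using List.head_dropWhile_not (· = 0) (l := d) (by simp [hD])
  have hsort : (a :: D).Pairwise (· ≤ ·) := hD ▸ hd.sublist (List.dropWhile_suffix _).sublist
  rw [hD] at hx
  exact (Nat.one_le_iff_ne_zero.2 ha).trans (head_le_of_pairwise hsort rfl x hx)

theorem sum_paths_one {M : Type*} [AddCommMonoid M] (F : List ℕ → M) {n : ℕ} (hn : n ≠ 0) :
    ∑ d ∈ paths 1 n, F d =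
      ∑ m ∈ Icc 1 n, ∑ e ∈ paths m (n - m), F (List.replicate m 0 ++ e.map (· + 1)) := by
  let split (d : List ℕ) : (_ : ℕ) × List ℕ :=
    ⟨(d.takeWhile (· = 0)).length, (d.dropWhile (· = 0)).map (· - 1)⟩
  let glue (x : (_ : ℕ) × List ℕ) : List ℕ := List.replicate x.1 0 ++ x.2.map (· + 1)
  have glue_split : ∀ d ∈ paths 1 n, glue (split d) = d := fun d hd => by
    simp only [glue, split]
    rw [map_sub_map_add (one_le_of_mem_dropWhile (mem_paths.1 hd).2.1),
      ← takeWhile_eq_zero_eq_replicate, List.takeWhile_append_dropWhile]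
  calc ∑ d ∈ paths 1 n, F d
      = ∑ x ∈ (Icc 1 n).sigma fun m => paths m (n - m), F (glue x) := by
        refine Finset.sum_nbij' split glue ?_ ?_ glue_split ?_ ?_
        · intro d hd
          obtain ⟨hlen, hsort, hbelow⟩ := mem_paths.1 hd
          have hk : 1 ≤ (d.takeWhile (· = 0)).length := by
            rcases d with _ | ⟨a, d⟩
            · exact absurd hlen.symm (by simpa using hn)
            · obtain rfl : a = 0 := by simpa [StrictlyBelow] using hbelow.1
              simp
          have hD := (List.dropWhile_suffix (· = 0) (l := d)).sublist
          have hsplit := List.takeWhile_append_dropWhile (p := (· = 0)) (l := d)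
          rw [takeWhile_eq_zero_eq_replicate] at hsplit
          rw [← hsplit, List.length_append, List.length_replicate] at hlen
          rw [← hsplit, strictlyBelow_append, List.length_replicate, Nat.add_comm] at hbelow
          simp only [split, Finset.mem_sigma, Finset.mem_Icc, mem_paths, List.length_map]
          exact ⟨⟨hk, by omega⟩, by omega, pairwise_le_map_sub (hsort.sublist hD),
            (strictlyBelow_map_sub (one_le_of_mem_dropWhile hsort)).2 hbelow.2⟩
        · rintro ⟨m, e⟩ hx
          simp only [Finset.mem_sigma, Finset.mem_Icc, mem_paths] at hx
          obtain ⟨⟨hm1, hmn⟩, hlen, hsort, hbelow⟩ := hx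
          simp only [glue, mem_paths, List.length_append, List.length_replicate, List.length_map,
            List.pairwise_append, List.pairwise_replicate, strictlyBelow_append]
          refine ⟨by omega, ⟨by simp, pairwise_le_map_add.2 hsort, by simp⟩,
            strictlyBelow_replicate_zero, ?_⟩
          rw [Nat.add_comm]
          exact strictlyBelow_map_add.2 hbelow
        · rintro ⟨m, e⟩ -
          obtain ⟨h1, h2⟩ := takeWhile_replicate_append_map_succ m e
          simp [glue, split, h1, h2, List.map_map, Function.comp_def]
        · intro d hd; rw [glue_split d hd]
    _ = _ := by simp only [Finset.sum_sigma, glue]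

lemma strictlyBelow_iff_getElem {m : ℕ} {e : List ℕ} :
    StrictlyBelow m e ↔ ∀ i (h : i < e.length), e[i] < m + i := by
  conv_lhs => rw [← List.ofFn_getElem (xs := e)]
  rw [strictlyBelow_ofFn]
  exact ⟨fun h i hi => h ⟨i, hi⟩, fun h i => h i i.2⟩

lemma hList_eq_ofFn {n : ℕ} (f : Fin n → Fin (n + 1)) :
    hList f = List.ofFn fun i => (f i : ℕ) := by
  rw [hList, List.ofFn_eq_map]

lemma sum_dyckFinset {M : Type*} [AddCommMonoid M] (F : List ℕ → M) (n : ℕ) :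
    ∑ f ∈ DyckFinset n, F (hList f) = ∑ d ∈ paths 1 n, F d := by
  have getD_le {d : List ℕ} (hd : d ∈ paths 1 n) {i : ℕ} (hi : i < n) :
      d.getD i 0 ≤ i ∧ (Fin.ofNat (n + 1) (d.getD i 0) : ℕ) = d.getD i 0 := by
    obtain ⟨hlen, -, hbelow⟩ := mem_paths.1 hd
    have := strictlyBelow_iff_getElem.1 hbelow i (by omega)
    rw [List.getD_eq_getElem _ _ (by omega), Fin.val_ofNat, Nat.mod_eq_of_lt (by omega)]
    omega
  refine Finset.sum_nbij' hList (fun d i => Fin.ofNat (n + 1) (d.getD i 0)) ?_ ?_ ?_ ?_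
    (fun _ _ => rfl)
  · intro f hf
    simp only [DyckFinset, Finset.mem_filter, Finset.mem_univ, true_and] at hf
    simp only [hList_eq_ofFn, mem_paths, List.length_ofFn, List.pairwise_ofFn, strictlyBelow_ofFn,
      true_and]
    exact ⟨fun i j hij => hf.1 i j hij.le, fun i => by have := hf.2 i; omega⟩
  · intro d hd
    obtain ⟨hlen, hsort, -⟩ := mem_paths.1 hd
    simp only [DyckFinset, Finset.mem_filter, Finset.mem_univ, true_and, Fin.le_iff_val_le_val,
      (getD_le hd _).2, Fin.is_lt]
    refine ⟨fun i j hij => ?_, fun i => (getD_le hd i.2).1⟩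
    rw [List.getD_eq_getElem _ _ (by omega), List.getD_eq_getElem _ _ (by omega)]
    rcases hij.lt_or_eq with h | h
    · exact List.pairwise_iff_getElem.1 hsort _ _ _ _ h
    · simp [h]
  · intro f hf
    funext i
    simp [hList_eq_ofFn]
  · intro d hd
    apply List.ext_getElem (by simp [hList, (mem_paths.1 hd).1])
    intro i h1 h2
    have hi : i < n := by simpa [hList] using h1
    simp only [hList, List.getElem_map, List.getElem_finRange, Fin.cast_mk, (getD_le hd hi).2]
    exact List.getD_eq_getElem _ _ h2

section GeneratingFunction

local notation "t" => (MvPolynomial.X 0 : MvPolynomial (Fin 2) ℚ)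
local notation "p" => (MvPolynomial.X 1 : MvPolynomial (Fin 2) ℚ)
local notation "C₁" => PowerSeries.map subP1 Cgf
local notation "y" => PowerSeries.C p * PowerSeries.X * C₁

noncomputable def segSum (m L : ℕ) : MvPolynomial (Fin 2) ℚ := ∑ e ∈ paths m L, t ^ segNum e

lemma coeff_Cgf (n : ℕ) :
    PowerSeries.coeff n Cgf = ∑ d ∈ paths 1 n, t ^ segNum d * p ^ lsegNum d := by
  rw [Cgf, PowerSeries.coeff_mk]
  split_ifs with hn
  · subst hn; simp [paths_zero, segNum_nil, lsegNum_nil]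
  · exact sum_dyckFinset (fun d => t ^ segNum d * p ^ lsegNum d) n

lemma coeff_C₁ (n : ℕ) : PowerSeries.coeff n C₁ = segSum 1 n := by
  simp [PowerSeries.coeff_map, coeff_Cgf, segSum, subP1]

lemma segSum_succ (m L : ℕ) :
    segSum (m + 1) L = ∑ jk ∈ antidiagonal L, segSum 1 jk.1 * segSum m jk.2 := by
  rw [segSum, sum_paths_succ]
  refine Finset.sum_congr rfl fun jk _ => ?_
  rw [segSum, segSum, Finset.sum_mul_sum]
  refine Finset.sum_congr rfl fun h hh => Finset.sum_congr rfl fun f _ => ?_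
  obtain ⟨hlen, -, hbelow⟩ := mem_paths.1 hh
  rw [segNum_append_map_add fun x hx => by have := hbelow.lt_add_length x hx; omega, pow_add]

lemma coeff_C₁_pow (m L : ℕ) : PowerSeries.coeff L (C₁ ^ m) = segSum m L := by
  induction m generalizing L with
  | zero =>
    rcases L with _ | L
    · simp [segSum, paths_zero, segNum_nil]
    · simp [segSum, paths, belowLists]
  | succ m ih =>
    rw [pow_succ', PowerSeries.coeff_mul, segSum_succ]
    exact Finset.sum_congr rfl fun jk _ => by rw [coeff_C₁, ih]

lemma coeff_Cgf_eq_mul_add_sum (n : ℕ) (hn : n ≠ 0) :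
    PowerSeries.coeff n Cgf =
      p * PowerSeries.coeff (n - 1) Cgf + ∑ m ∈ Icc 2 n, t * p ^ m * segSum m (n - m) := by
  rw [coeff_Cgf, sum_paths_one _ hn, ← Finset.insert_Icc_add_one_left_eq_Icc (by omega),
    Finset.sum_insert (by simp), coeff_Cgf, Finset.mul_sum]
  congr 1
  · refine Finset.sum_congr rfl fun e _ => ?_
    have hne : (e.map (· + 1)).head? ≠ some 0 := by simp [List.head?_map]
    simp only [List.replicate_one, List.cons_append, List.nil_append, segNum_cons, lsegNum_cons,
      hne, false_and, if_false, segNum_map (add_left_injective 1),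
      lsegNum_map (add_left_injective 1), add_zero, pow_succ]
    ring
  · refine Finset.sum_congr rfl fun m hm => ?_
    have hm : 2 ≤ m := (Finset.mem_Icc.1 hm).1
    rw [segSum, Finset.mul_sum]
    refine Finset.sum_congr rfl fun e _ => ?_
    have hne : (e.map (· + 1)).head? ≠ some 0 := by simp [List.head?_map]
    rw [segNum_replicate_append hm hne, lsegNum_replicate_append hm hne,
      segNum_map (add_left_injective 1)]
    ring

lemma coeff_C_mul_y_pow (m n : ℕ) (hmn : m ≤ n) :
    PowerSeries.coeff n (PowerSeries.C t * y ^ m) =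
      t * p ^ m * segSum m (n - m) := by
  rw [show PowerSeries.C t * y ^ m =
      PowerSeries.C (t * p ^ m) * (PowerSeries.X ^ m * C₁ ^ m) by
        simp only [map_mul, map_pow]; ring,
    PowerSeries.coeff_C_mul, PowerSeries.coeff_X_pow_mul', if_pos hmn, coeff_C₁_pow]

lemma coeff_Cgf_sub_eq_sum (n : ℕ) :
    PowerSeries.coeff n (Cgf - PowerSeries.C p * PowerSeries.X * Cgf - PowerSeries.C p) =
      ∑ m ∈ Icc 2 n,
        PowerSeries.coeff n (PowerSeries.C t * y ^ m) := by
  rw [Finset.sum_congr rfl fun m hm => coeff_C_mul_y_pow m n (Finset.mem_Icc.1 hm).2,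
    map_sub, map_sub, mul_assoc, PowerSeries.coeff_C_mul, PowerSeries.coeff_C]
  rcases n with _ | n
  · simp [coeff_Cgf, paths_zero, segNum_nil, lsegNum_nil]
  · rw [PowerSeries.coeff_succ_X_mul, coeff_Cgf_eq_mul_add_sum (n + 1) n.succ_ne_zero,
      if_neg n.succ_ne_zero]
    simp

end GeneratingFunction

theorem stmt15 :
    letI T : PowerSeries (MvPolynomial (Fin 2) ℚ) := PowerSeries.C (MvPolynomial.X 0)
    letI P : PowerSeries (MvPolynomial (Fin 2) ℚ) := PowerSeries.C (MvPolynomial.X 1)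
    letI X : PowerSeries (MvPolynomial (Fin 2) ℚ) := PowerSeries.X
    letI C1 : PowerSeries (MvPolynomial (Fin 2) ℚ) := PowerSeries.map subP1 Cgf
    T * P ^ 2 * X ^ 2 * C1 ^ 2 + P * X * (Cgf - P * X * Cgf - P) * C1 -
      (Cgf - P * X * Cgf - P) = 0 := by
  have hX : PowerSeries.X ∣ PowerSeries.C (MvPolynomial.X 1) * PowerSeries.X *
      PowerSeries.map subP1 Cgf :=
    ⟨PowerSeries.C (MvPolynomial.X 1) * PowerSeries.map subP1 Cgf, by ring⟩
  have key := PowerSeries.mul_one_sub_eq_of_coeff_eq_sum hX coeff_Cgf_sub_eq_sum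
  linear_combination -key

end KArr
end
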